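/- arXiv:math/0502363 — 11 statements merged into one kernel-verified Lean document; each statement's English description precedes it below -/
import Mathlib

section
/- Let B be the (n choose 2) × n matrix with rows indexed by pairs 1 ≤ i < j ≤ n and columns by k = 1,…,n, with entry b_{(i,j),k} = δ_{i,k} − δ_{j,k}. Then the permanent of the (n choose 2)×(n choose 2) matrix B·Bᵀ equals 1!·2!···n!. -/
open Matrix

/-- The matrix `B` with rows indexed by pairs `i < j` and columns by `k`,
with entry `δ_{i,k} − δ_{j,k}`. -/
def Bmat (n : ℕ) : Matrix {p : Fin n × Fin n // p.1 < p.2} (Fin n) ℚ :=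
  fun p k => (if p.val.1 = k then 1 else 0) - (if p.val.2 = k then 1 else 0)

open Finset MvPolynomial

namespace SuperFac

abbrev E (n : ℕ) := {p : Fin n × Fin n // p.1 < p.2}

noncomputable section

variable {n : ℕ}

def w (n : ℕ) (f : E n → Fin n) : ℚ := ∏ e : E n, Bmat n e (f e)

def mF (f : E n → Fin n) : Fin n →₀ ℕ := ∑ e : E n, Finsupp.single (f e) 1

def phi (n : ℕ) (d : Fin n →₀ ℕ) : ℚ := ∏ k : Fin n, ((d k).factorial : ℚ)

def P (n : ℕ) : MvPolynomial (Fin n) ℚ := ∏ e : E n, (X e.val.1 - X e.val.2)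

def Q (n : ℕ) : MvPolynomial (Fin n) ℚ := ∏ e : E n, (X e.val.2 - X e.val.1)

def expo (σ : Equiv.Perm (Fin n)) : Fin n →₀ ℕ := ∑ i : Fin n, Finsupp.single (σ i) (i : ℕ)

/-! ### The polynomial `P` and its coefficients -/

lemma X_sub_X (e : E n) :
    (X e.val.1 - X e.val.2 : MvPolynomial (Fin n) ℚ)
      = ∑ k : Fin n, monomial (Finsupp.single k 1) (Bmat n e k) := by
  have : ∀ (a : Fin n), (X a : MvPolynomial (Fin n) ℚ)
      = ∑ k : Fin n, monomial (Finsupp.single k 1) (if a = k then 1 else 0) := by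
    intro a
    rw [Finset.sum_congr rfl (fun k _ => by
      rw [apply_ite (monomial (Finsupp.single k 1)) (a = k) 1 0, map_zero])]
    rw [Finset.sum_ite_eq univ a (fun k => monomial (Finsupp.single k 1) 1)]
    simp [X_pow_eq_monomial.symm]
  rw [this e.val.1, this e.val.2, ← Finset.sum_sub_distrib]
  refine Finset.sum_congr rfl fun k _ => ?_
  rw [Bmat, map_sub]

lemma hP : P n = ∑ f : E n → Fin n, monomial (mF f) (w n f) := by
  rw [P, Finset.prod_congr rfl (fun e _ => X_sub_X e), Finset.prod_univ_sum]
  rw [Fintype.piFinset_univ]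
  refine Finset.sum_congr rfl fun f _ => ?_
  rw [mF, monomial_sum_index, w, map_prod, ← Finset.prod_mul_distrib]
  refine Finset.prod_congr rfl fun e _ => ?_
  rw [C_mul_monomial, mul_one]

lemma coeff_P (d : Fin n →₀ ℕ) :
    coeff d (P n) = ∑ f ∈ univ.filter (fun f : E n → Fin n => mF f = d), w n f := by
  rw [hP, coeff_sum, Finset.sum_filter]
  refine Finset.sum_congr rfl fun f _ => ?_
  rw [coeff_monomial]

/-! ### The polynomial `Q` as a Vandermonde determinant -/

lemma prod_E {M : Type*} [CommMonoid M] (F : Fin n × Fin n → M) :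
    ∏ e : E n, F e.val = ∏ i : Fin n, ∏ j ∈ Ioi i, F (i, j) := by
  rw [Finset.prod_sigma']
  refine Finset.prod_bij' (fun (e : E n) (_ : e ∈ univ) => (⟨e.val.1, e.val.2⟩ : Σ _ : Fin n, Fin n))
    (fun x hx => (⟨(x.fst, x.snd), mem_Ioi.mp (Finset.mem_sigma.mp hx).2⟩ : E n))
    (fun a ha => Finset.mem_sigma.mpr ⟨mem_univ _, mem_Ioi.mpr a.2⟩)
    (fun a ha => mem_univ _)
    (fun a ha => rfl) (fun a ha => rfl) (fun a ha => rfl)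

lemma expo_apply (σ : Equiv.Perm (Fin n)) (k : Fin n) : expo σ k = (σ.symm k : ℕ) := by
  rw [expo, Finsupp.finset_sum_apply]
  rw [Finset.sum_congr rfl (fun i _ => Finsupp.single_apply)]
  rw [← Equiv.sum_comp σ.symm (fun i => if σ i = k then (i : ℕ) else 0)]
  simp

lemma expo_inj : Function.Injective (expo (n := n)) := by
  intro σ τ h
  have h1 : ∀ k, (σ.symm k : ℕ) = (τ.symm k : ℕ) := by
    intro k; rw [← expo_apply, ← expo_apply, h]
  have h2 : σ.symm = τ.symm := Equiv.ext fun k => Fin.ext (h1 k)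
  calc σ = σ.symm.symm := rfl
    _ = τ.symm.symm := by rw [h2]
    _ = τ := rfl

lemma hQ : Q n = ∑ σ : Equiv.Perm (Fin n),
    monomial (expo σ) ((Equiv.Perm.sign σ : ℤ) : ℚ) := by
  have h1 : Q n = det (vandermonde fun i => (X i : MvPolynomial (Fin n) ℚ)) := by
    rw [det_vandermonde, Q, prod_E (fun p => (X p.2 - X p.1 : MvPolynomial (Fin n) ℚ))]
  rw [h1, det_apply]
  refine Finset.sum_congr rfl fun σ _ => ?_
  have h2 : ∏ i, vandermonde (fun i => (X i : MvPolynomial (Fin n) ℚ)) (σ i) i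
      = monomial (expo σ) 1 := by
    rw [expo, monomial_sum_one]
    refine Finset.prod_congr rfl fun i _ => ?_
    rw [vandermonde, of_apply, X_pow_eq_monomial]
  rw [h2, smul_monomial]
  congr 1
  rw [Units.smul_def, zsmul_eq_mul, mul_one]

lemma coeff_Q (d : Fin n →₀ ℕ) :
    coeff d (Q n) = ∑ σ ∈ univ.filter (fun σ : Equiv.Perm (Fin n) => expo σ = d),
      ((Equiv.Perm.sign σ : ℤ) : ℚ) := by
  rw [hQ, coeff_sum, Finset.sum_filter]
  refine Finset.sum_congr rfl fun σ _ => ?_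
  rw [coeff_monomial]

lemma coeff_sq (d : Fin n →₀ ℕ) : (coeff d (P n))^2 = (coeff d (Q n))^2 := by
  have h1 : P n = (-1 : MvPolynomial (Fin n) ℚ) ^ (Fintype.card (E n)) * Q n := by
    rw [P, Q, ← Finset.card_univ, ← Finset.prod_const, ← Finset.prod_mul_distrib]
    refine Finset.prod_congr rfl fun e _ => ?_
    ring
  have h2 : coeff d (P n) = (-1 : ℚ) ^ (Fintype.card (E n)) * coeff d (Q n) := by
    rw [h1]
    rw [show ((-1 : MvPolynomial (Fin n) ℚ)) = C (-1 : ℚ) by simp, ← map_pow, coeff_C_mul]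
  rw [h2, mul_pow, ← pow_mul, mul_comm (Fintype.card (E n)) 2, pow_mul, neg_one_sq, one_pow,
    one_mul]

/-! ### Counting permutations with prescribed composition -/

section Counting
variable {α β : Type*} [Fintype α] [DecidableEq α] [Fintype β] [DecidableEq β]

def permFiberEquiv (f g : α → β) :
    {σ : Equiv.Perm α // f ∘ σ = g} ≃ (∀ b : β, {a // g a = b} ≃ {a // f a = b}) where
  toFun := fun ⟨σ, h⟩ => fun b =>
    { toFun := fun a => ⟨σ a.val, by
        have := congrFun h a.val; simp only [Function.comp_apply] at this
        rw [this, a.2]⟩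
      invFun := fun a => ⟨σ.symm a.val, by
        have := congrFun h (σ.symm a.val); simp only [Function.comp_apply] at this
        rw [← this, Equiv.apply_symm_apply, a.2]⟩
      left_inv := fun a => Subtype.ext (σ.symm_apply_apply a.val)
      right_inv := fun a => Subtype.ext (σ.apply_symm_apply a.val) }
  invFun := fun ε =>
    ⟨((Equiv.sigmaFiberEquiv g).symm.trans ((Equiv.sigmaCongrRight ε).trans
        (Equiv.sigmaFiberEquiv f))), by
      funext a
      simp [Equiv.sigmaFiberEquiv, Equiv.sigmaCongrRight]
      exact (ε (g a) ⟨a, rfl⟩).2⟩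
  left_inv := fun ⟨σ, h⟩ => by
    apply Subtype.ext
    apply Equiv.ext
    intro a
    rfl
  right_inv := fun ε => by
    funext b
    apply Equiv.ext
    intro a
    apply Subtype.ext
    obtain ⟨a, ha⟩ := a
    subst ha
    rfl

lemma card_perm_fiber (f g : α → β) :
    (univ.filter fun σ : Equiv.Perm α => f ∘ σ = g).card =
      if (∀ b, (univ.filter fun a => f a = b).card = (univ.filter fun a => g a = b).card)
      then ∏ b : β, Nat.factorial ((univ.filter fun a => f a = b).card) else 0 := by
  rw [← Fintype.card_subtype]
  rw [Fintype.card_congr (permFiberEquiv f g)]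
  rw [Fintype.card_pi]
  have hcard : ∀ b : β, Fintype.card ({a // g a = b} ≃ {a // f a = b})
      = if (univ.filter fun a => f a = b).card = (univ.filter fun a => g a = b).card
        then Nat.factorial ((univ.filter fun a => f a = b).card) else 0 := by
    intro b
    by_cases h : (univ.filter fun a => f a = b).card = (univ.filter fun a => g a = b).card
    · rw [if_pos h]
      have : Fintype.card {a // g a = b} = Fintype.card {a // f a = b} := by
        rw [Fintype.card_subtype, Fintype.card_subtype, h]
      rw [Fintype.card_equiv (Fintype.equivOfCardEq this)]
      rw [Fintype.card_subtype, h]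
    · rw [if_neg h]
      rw [Fintype.card_eq_zero_iff]
      constructor
      intro e
      exact h ((Fintype.card_subtype _).symm.trans
        ((Fintype.card_congr e.symm).trans (Fintype.card_subtype _)))
  rw [Finset.prod_congr rfl fun b _ => hcard b]
  by_cases H : ∀ b, (univ.filter fun a => f a = b).card = (univ.filter fun a => g a = b).card
  · rw [if_pos H]
    exact Finset.prod_congr rfl fun b _ => if_pos (H b)
  · rw [if_neg H]
    push_neg at H
    obtain ⟨b, hb⟩ := H
    exact Finset.prod_eq_zero (mem_univ b) (if_neg hb)

end Counting

lemma mF_apply (f : E n → Fin n) (k : Fin n) :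
    mF f k = (univ.filter fun e : E n => f e = k).card := by
  rw [mF, Finsupp.finset_sum_apply, Finset.card_filter]
  refine Finset.sum_congr rfl fun e _ => ?_
  rw [Finsupp.single_apply]

lemma count_cast (f g : E n → Fin n) :
    (((univ.filter fun σ : Equiv.Perm (E n) => f ∘ σ = g).card : ℚ))
      = if mF f = mF g then phi n (mF f) else 0 := by
  rw [card_perm_fiber]
  have hiff : (∀ b, (univ.filter fun a => f a = b).card
      = (univ.filter fun a => g a = b).card) ↔ mF f = mF g := by
    constructor
    · intro h
      ext k
      rw [mF_apply, mF_apply, h k]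
    · intro h k
      rw [← mF_apply, ← mF_apply, h]
  by_cases h : mF f = mF g
  · rw [if_pos (hiff.mpr h), if_pos h, phi, Nat.cast_prod]
    refine Finset.prod_congr rfl fun k _ => ?_
    rw [mF_apply]
  · rw [if_neg (fun hh => h (hiff.mp hh)), if_neg h, Nat.cast_zero]

/-! ### The fiberwise-square lemma -/

lemma lemM {ι κ : Type*} [Fintype ι] [DecidableEq ι] [DecidableEq κ]
    (m : ι → κ) (w : ι → ℚ) (φ : κ → ℚ) (D : Finset κ) (hD : ∀ a : ι, m a ∈ D) :
    ∑ a : ι, ∑ b : ι, (if m a = m b then φ (m a) else 0) * (w a * w b)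
      = ∑ d ∈ D, φ d * (∑ a ∈ univ.filter (fun a => m a = d), w a)^2 := by
  rw [← Finset.sum_fiberwise_of_maps_to (t := D)
    (fun a _ => hD a)
    (fun a => ∑ b : ι, (if m a = m b then φ (m a) else 0) * (w a * w b))]
  refine Finset.sum_congr rfl fun d hd => ?_
  rw [sq, Finset.sum_mul_sum, Finset.mul_sum]
  refine Finset.sum_congr rfl fun a ha => ?_
  have hma : m a = d := (mem_filter.mp ha).2
  rw [Finset.mul_sum, Finset.sum_filter]
  refine Finset.sum_congr rfl fun b _ => ?_
  rw [hma]
  by_cases h : m b = d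
  · rw [if_pos h, if_pos h.symm]
  · rw [if_neg h, if_neg (fun hh => h hh.symm), zero_mul]

/-! ### The permanent side -/

lemma perm_expand :
    (Bmat n * (Bmat n)ᵀ).permanent
      = ∑ σ : Equiv.Perm (E n), ∑ f : E n → Fin n, w n (f ∘ σ) * w n f := by
  rw [permanent]
  have step1 : ∀ σ : Equiv.Perm (E n),
      (∏ e : E n, (Bmat n * (Bmat n)ᵀ) (σ e) e)
        = ∑ f : E n → Fin n, w n (f ∘ σ.symm) * w n f := by
    intro σ
    have h3 : ∀ e : E n, (Bmat n * (Bmat n)ᵀ) (σ e) e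
        = ∑ k : Fin n, Bmat n (σ e) k * Bmat n e k := by
      intro e; rw [mul_apply]; rfl
    rw [Finset.prod_congr rfl fun e _ => h3 e, Finset.prod_univ_sum,
      Fintype.piFinset_univ]
    refine Finset.sum_congr rfl fun f _ => ?_
    rw [Finset.prod_mul_distrib]
    congr 1
    rw [w, ← Equiv.prod_comp σ (fun a => Bmat n a ((f ∘ ⇑σ.symm) a))]
    refine Finset.prod_congr rfl fun e _ => ?_
    simp
  rw [Finset.sum_congr rfl fun σ _ => step1 σ]
  exact Fintype.sum_equiv (Equiv.inv (Equiv.Perm (E n))) _ _ (fun x => rfl)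

lemma perm_as_dsum (D : Finset (Fin n →₀ ℕ)) (hD : ∀ f : E n → Fin n, mF f ∈ D) :
    (Bmat n * (Bmat n)ᵀ).permanent
      = ∑ d ∈ D, phi n d * (coeff d (P n))^2 := by
  rw [perm_expand, Finset.sum_comm]
  have step2 : ∀ f : E n → Fin n,
      (∑ σ : Equiv.Perm (E n), w n (f ∘ σ) * w n f)
        = ∑ g : E n → Fin n, (if mF f = mF g then phi n (mF f) else 0) * (w n f * w n g) := by
    intro f
    rw [← Finset.sum_fiberwise_of_maps_to (t := (univ : Finset (E n → Fin n)))
      (fun (σ : Equiv.Perm (E n)) _ => mem_univ (f ∘ ⇑σ))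
      (fun σ => w n (f ∘ σ) * w n f)]
    refine Finset.sum_congr rfl fun g _ => ?_
    rw [Finset.sum_congr rfl (fun σ hσ => by rw [(mem_filter.mp hσ).2]),
      Finset.sum_const, nsmul_eq_mul, count_cast]
    ring
  rw [Finset.sum_congr rfl fun f _ => step2 f, lemM (mF (n := n)) (w n) (phi n) D hD]
  refine Finset.sum_congr rfl fun d _ => ?_
  rw [coeff_P]

/-! ### The factorial side -/

lemma sign_sq (σ : Equiv.Perm (Fin n)) :
    ((Equiv.Perm.sign σ : ℤ) : ℚ) * ((Equiv.Perm.sign σ : ℤ) : ℚ) = 1 := by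
  rcases Int.units_eq_one_or (Equiv.Perm.sign σ) with h | h <;> rw [h] <;> norm_num

lemma phi_expo (σ : Equiv.Perm (Fin n)) :
    phi n (expo σ) = ∏ k : Fin n, ((k : ℕ).factorial : ℚ) := by
  rw [phi, Finset.prod_congr rfl (fun k _ => by rw [expo_apply])]
  exact Equiv.prod_comp σ.symm (fun k => (((k : ℕ).factorial : ℚ)))

lemma arith (n : ℕ) :
    (n.factorial : ℚ) * ∏ k ∈ range n, (Nat.factorial k : ℚ)
      = ∏ k ∈ Finset.Icc 1 n, (Nat.factorial k : ℚ) := by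
  induction n with
  | zero => simp
  | succ m ih =>
    rw [Finset.prod_range_succ, Finset.prod_Icc_succ_top (Nat.succ_le_succ (Nat.zero_le m)),
      ← ih]
    push_cast [Nat.factorial_succ]
    ring

lemma fact_side (D : Finset (Fin n →₀ ℕ)) (hD : ∀ σ : Equiv.Perm (Fin n), expo σ ∈ D) :
    (∑ d ∈ D, phi n d * (coeff d (Q n))^2)
      = ∏ k ∈ Finset.Icc 1 n, (Nat.factorial k : ℚ) := by
  have h1 : (∑ d ∈ D, phi n d * (coeff d (Q n))^2)
      = ∑ σ : Equiv.Perm (Fin n), ∑ τ : Equiv.Perm (Fin n),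
          (if expo σ = expo τ then phi n (expo σ) else 0)
            * (((Equiv.Perm.sign σ : ℤ) : ℚ) * ((Equiv.Perm.sign τ : ℤ) : ℚ)) := by
    rw [lemM (expo (n := n)) (fun σ => ((Equiv.Perm.sign σ : ℤ) : ℚ)) (phi n) D hD]
    refine Finset.sum_congr rfl fun d _ => ?_
    rw [coeff_Q]
  rw [h1]
  have h2 : ∀ σ : Equiv.Perm (Fin n),
      (∑ τ : Equiv.Perm (Fin n), (if expo σ = expo τ then phi n (expo σ) else 0)
        * (((Equiv.Perm.sign σ : ℤ) : ℚ) * ((Equiv.Perm.sign τ : ℤ) : ℚ)))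
      = phi n (expo σ) := by
    intro σ
    rw [Finset.sum_eq_single σ]
    · rw [if_pos rfl, sign_sq, mul_one]
    · intro τ _ hτ
      rw [if_neg (fun h => hτ (expo_inj h).symm), zero_mul]
    · intro h
      exact absurd (mem_univ σ) h
  rw [Finset.sum_congr rfl fun σ _ => h2 σ,
    Finset.sum_congr rfl fun σ _ => phi_expo σ, Finset.sum_const, Finset.card_univ,
    Fintype.card_perm, Fintype.card_fin, nsmul_eq_mul]
  -- now: (n ! : ℚ) * ∏ k : Fin n, (k ! : ℚ) = ∏ k in Icc 1 n, (k ! : ℚ)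
  rw [show (∏ k : Fin n, (((k : ℕ).factorial : ℚ))) = ∏ k ∈ range n, ((Nat.factorial k : ℚ))
    from Fin.prod_univ_eq_prod_range (fun k => ((Nat.factorial k : ℚ))) n]
  exact arith n

/-! ### Comparing the two index sets -/

lemma psi_zero_of_not_mem_mF (d : Fin n →₀ ℕ) (hd : d ∉ univ.image (mF (n := n))) :
    coeff d (P n) = 0 := by
  rw [coeff_P]
  have h0 : univ.filter (fun f : E n → Fin n => mF f = d) = ∅ := by
    refine Finset.filter_false_of_mem ?_
    intro f _ hf
    exact hd (hf ▸ mem_image_of_mem _ (mem_univ f))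
  rw [h0, Finset.sum_empty]

lemma psi_zero_of_not_mem_expo (d : Fin n →₀ ℕ) (hd : d ∉ univ.image (expo (n := n))) :
    coeff d (Q n) = 0 := by
  rw [coeff_Q]
  have h0 : univ.filter (fun σ : Equiv.Perm (Fin n) => expo σ = d) = ∅ := by
    refine Finset.filter_false_of_mem ?_
    intro σ _ hσ
    exact hd (hσ ▸ mem_image_of_mem _ (mem_univ σ))
  rw [h0, Finset.sum_empty]

end
end SuperFac

namespace SuperFac
noncomputable section
variable {n : ℕ}

def Dset (n : ℕ) : Finset (Fin n →₀ ℕ) :=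
  univ.image (mF (n := n)) ∪ univ.image (expo (n := n))

lemma mF_mem_Dset (f : E n → Fin n) : mF f ∈ Dset n :=
  Finset.mem_union_left _ (mem_image_of_mem _ (mem_univ f))

lemma expo_mem_Dset (σ : Equiv.Perm (Fin n)) : expo σ ∈ Dset n :=
  Finset.mem_union_right _ (mem_image_of_mem _ (mem_univ σ))

end
end SuperFac

theorem stmt0 (n : ℕ) :
    (Bmat n * (Bmat n)ᵀ).permanent = ∏ k ∈ Finset.Icc 1 n, (Nat.factorial k : ℚ) := by
  rw [SuperFac.perm_as_dsum (SuperFac.Dset n) SuperFac.mF_mem_Dset,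
    ← SuperFac.fact_side (SuperFac.Dset n) SuperFac.expo_mem_Dset]
  exact Finset.sum_congr rfl fun d _ => by rw [SuperFac.coeff_sq]
end

section
/- For a 132-avoiding permutation w ∈ S_n, the i-th entry of its code satisfies c_i(w) = min{w_1, …, w_i} − 1 for every i = 1, …, n. -/
/-- The code of a permutation: `c_i(w) = #{j > i : w_j < w_i}`. -/
def code {n : ℕ} (w : Equiv.Perm (Fin n)) (i : Fin n) : ℕ :=
  (Finset.univ.filter fun j => i < j ∧ w j < w i).card

/-- `w` is 132-avoiding: no indices `i < j < k` with `w i < w k < w j`. -/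
def Avoids132 {n : ℕ} (w : Equiv.Perm (Fin n)) : Prop :=
  ¬ ∃ i j k : Fin n, i < j ∧ j < k ∧ w i < w k ∧ w k < w j

/-- For a 132-avoiding permutation, `c_i(w) = min{w_1,…,w_i} − 1`
(in 0-based value conventions, `c_i(w) = min{w 0, …, w i}`). -/
theorem stmt2 (n : ℕ) (w : Equiv.Perm (Fin n)) (h : Avoids132 w) (i : Fin n) :
    code w i =
      Finset.inf' (Finset.univ.filter fun j => j ≤ i) ⟨i, by simp⟩
        (fun j => (w j : ℕ)) := by
  set m := Finset.inf' (Finset.univ.filter fun j => j ≤ i) ⟨i, by simp⟩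
      (fun j => (w j : ℕ)) with hm
  have hmle : m ≤ (w i : ℕ) := Finset.inf'_le _ (by simp)
  have hmn : m < n := lt_of_le_of_lt hmle (w i).isLt
  obtain ⟨j0, hj0mem, hj0⟩ := Finset.exists_mem_eq_inf'
      (⟨i, by simp⟩ : (Finset.univ.filter fun j => j ≤ i).Nonempty)
      (fun j => (w j : ℕ))
  have hj0le : j0 ≤ i := by simpa using hj0mem
  have hset : (Finset.univ.filter fun j => i < j ∧ w j < w i)
      = Finset.univ.filter fun j => (w j : ℕ) < m := by
    ext j
    simp only [Finset.mem_filter, Finset.mem_univ, true_and]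
    constructor
    · rintro ⟨hij, hji⟩
      by_contra hge
      push_neg at hge
      have hji' : (w j : ℕ) < (w i : ℕ) := hji
      have hne : m < (w j : ℕ) := by
        rcases lt_or_eq_of_le hge with h1 | h1
        · exact h1
        · exfalso
          have hwjj0 : w j = w j0 := Fin.ext (by omega)
          have : j = j0 := w.injective hwjj0
          subst this
          exact absurd (lt_of_le_of_lt hj0le hij) (lt_irrefl _)
      have hj0i : j0 < i := by
        rcases lt_or_eq_of_le hj0le with h1 | h1
        · exact h1
        · exfalso; subst h1; omega
      exact h ⟨j0, i, j, hj0i, hij, by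
        constructor <;> rw [Fin.lt_def] <;> omega⟩
    · intro hj
      have hjm : m ≤ (w j : ℕ) → False := fun hle => absurd hj (not_lt.mpr hle)
      have hij : i < j := by
        by_contra hle
        push_neg at hle
        exact hjm (Finset.inf'_le _ (by simp [hle]))
      exact ⟨hij, by rw [Fin.lt_def]; omega⟩
  rw [code, hset]
  have h1 : (Finset.univ.filter fun j => (w j : ℕ) < m).card
      = (Finset.univ.filter fun v : Fin n => (v : ℕ) < m).card := by
    apply Finset.card_bij (fun j _ => w j)
    · intro a ha; simp only [Finset.mem_filter, Finset.mem_univ, true_and] at ha ⊢; exact ha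
    · intro a _ b _ hab; exact w.injective hab
    · intro b hb
      refine ⟨w.symm b, ?_, by simp⟩
      simp only [Finset.mem_filter, Finset.mem_univ, true_and] at hb ⊢
      simpa using hb
  rw [h1]
  have h2 : (Finset.univ.filter fun v : Fin n => (v : ℕ) < m).card
      = (Finset.range m).card := by
    refine Finset.card_bij (fun v _ => (v : ℕ)) ?_ ?_ ?_
    · intro a ha; simp only [Finset.mem_filter, Finset.mem_univ, true_and] at ha
      simpa using ha
    · intro a _ b _ hab; exact Fin.ext hab
    · intro b hb
      simp only [Finset.mem_range] at hb
      exact ⟨⟨b, lt_trans hb hmn⟩, by simp [hb], rfl⟩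
  rw [h2, Finset.card_range]
end

section
/- For a 132-avoiding permutation w ∈ S_n, the inversion set Inv_i(w) = {j : i < j ≤ n and w_i > w_j} equals {k : w_k < min{w_1,…,w_i}} for every i. -/
theorem Avoids132.apply_lt_of_lt_of_lt {n : ℕ} {w : Equiv.Perm (Fin n)} (h : Avoids132 w)
    {t i k : Fin n} (hti : t < i) (hik : i < k) (hki : w k < w i) : w k < w t := by
  by_contra! hle
  have htk : w t ≠ w k := w.injective.ne (hti.trans hik).ne
  exact h ⟨t, i, k, hti, hik, hle.lt_of_ne htk, hki⟩

/-- For a 132-avoiding permutation, the inversion set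
`Inv_i(w) = {j : i < j ≤ n, w_i > w_j}` equals `{k : w_k < min{w_1,…,w_i}}`. -/
theorem stmt3 (n : ℕ) (w : Equiv.Perm (Fin n)) (h : Avoids132 w) (i : Fin n) :
    (Finset.univ.filter fun j => i < j ∧ w j < w i) =
      (Finset.univ.filter fun k =>
        (w k : ℕ) < Finset.inf' (Finset.univ.filter fun j => j ≤ i) ⟨i, by simp⟩
          (fun j => (w j : ℕ))) := by
  ext k
  simp only [Finset.mem_filter, Finset.mem_univ, true_and]
  constructor
  · rintro ⟨hik, hki⟩
    refine (Finset.lt_inf'_iff _).mpr fun t ht => ?_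
    rcases (Finset.mem_filter.mp ht).2.lt_or_eq with hti | rfl
    · exact h.apply_lt_of_lt_of_lt hti hik hki
    · exact hki
  · intro hk
    replace hk := (Finset.lt_inf'_iff _).mp hk
    refine ⟨?_, hk i (by simp)⟩
    by_contra! hki
    exact lt_irrefl _ (hk k (by simp [hki]))
end

section
/- The map w ↦ code(w) is a bijection from the set of 132-avoiding permutations in S_n onto the set C_n of partitions μ = (μ_1 ≥ ⋯ ≥ μ_n ≥ 0) with μ_i ≤ n − i for all i. -/
/-!
A permutation avoids 132 exactly when its code is weakly decreasing. If `i < j` and `(j, t)` is an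
inversion that `(i, t)` is not, then `(i, j, t)` is a 132 pattern; conversely, from a pattern
`(i, j, k)` take `m < j` last with `w m < w k`: then every inversion `(m, t)` is one of `j`, and so
is `(j, k)`, whence `code m < code j`. Finally the code maps `S_n` onto all sequences with
`c_i ≤ n - 1 - i` (prescribe `w 0 = c_0` and recurse on the remaining values), and both sets have
`n!` elements, so it is injective.
-/

open Finset
open scoped Nat

variable {n : ℕ}

lemma code_le (w : Equiv.Perm (Fin n)) (i : Fin n) : code w i ≤ n - 1 - i :=
  calc code w i ≤ #(Ioi i) := card_le_card fun j hj => by simpa using (mem_filter.1 hj).2.1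
    _ = n - 1 - i := Fin.card_Ioi i

lemma code_zero (w : Equiv.Perm (Fin (n + 1))) : code w 0 = w 0 := by
  calc code w 0 = #{j | w j < w 0} := by
        refine congrArg card (filter_congr fun j _ => and_iff_right_of_imp fun h => ?_)
        exact Fin.pos_iff_ne_zero.2 (by rintro rfl; exact lt_irrefl _ h)
    _ = #(Iio (w 0)) := card_equiv w (by simp)
    _ = w 0 := Fin.card_Iio _

lemma antitone_code_of_avoids132 {w : Equiv.Perm (Fin n)} (hw : Avoids132 w) :
    Antitone (code w) := by
  intro i j hij
  rcases hij.eq_or_lt with rfl | hij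
  · exact le_rfl
  refine card_le_card fun t ht => ?_
  simp only [mem_filter, mem_univ, true_and] at ht ⊢
  obtain ⟨hjt, hwt⟩ := ht
  refine ⟨hij.trans hjt, lt_of_not_ge fun hit => hw ⟨i, j, t, hij, hjt, ?_, hwt⟩⟩
  exact hit.lt_of_ne (w.injective.ne (hij.trans hjt).ne)

lemma code_lt_code {w : Equiv.Perm (Fin n)} {m j k : Fin n} (hmj : m < j) (hjk : j < k)
    (hmk : w m < w k) (hkj : w k < w j) (hgap : ∀ t, m < t → t < j → w k < w t) :
    code w m < code w j := by
  refine card_lt_card (ssubset_iff_of_subset (fun t ht => ?_) |>.2 ⟨k, ?_, ?_⟩)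
  · simp only [mem_filter, mem_univ, true_and] at ht ⊢
    obtain ⟨hmt, hwt⟩ := ht
    have htk : w t < w k := hwt.trans hmk
    refine ⟨lt_of_not_ge fun htj => ?_, htk.trans hkj⟩
    rcases htj.lt_or_eq with htj | rfl
    · exact (hgap t hmt htj).not_gt htk
    · exact htk.not_gt hkj
  · simp [hjk, hkj]
  · simp [hmk.not_gt]

lemma avoids132_of_antitone_code {w : Equiv.Perm (Fin n)} (hw : Antitone (code w)) :
    Avoids132 w := by
  rintro ⟨i, j, k, hij, hjk, hik, hkj⟩
  obtain ⟨m, hm, hmax⟩ := exists_max_image ({t | t < j ∧ w t < w k} : Finset (Fin n)) id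
    ⟨i, by simp [hij, hik]⟩
  obtain ⟨hmj, hmk⟩ := (mem_filter.1 hm).2
  have hgap : ∀ t, m < t → t < j → w k < w t := fun t hmt htj =>
    lt_of_not_ge fun htk => hmt.not_ge <| hmax t <| mem_filter.2
      ⟨mem_univ t, htj, htk.lt_of_ne (w.injective.ne (htj.trans hjk).ne)⟩
  exact (hw hmj.le).not_gt (code_lt_code hmj hjk hmk hkj hgap)

lemma avoids132_iff_antitone_code {w : Equiv.Perm (Fin n)} : Avoids132 w ↔ Antitone (code w) :=
  ⟨antitone_code_of_avoids132, avoids132_of_antitone_code⟩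

def permCons (p : Fin (n + 1)) (e : Equiv.Perm (Fin n)) : Equiv.Perm (Fin (n + 1)) :=
  (finSuccEquiv n).trans (e.optionCongr.trans (finSuccEquiv' p).symm)

@[simp] lemma permCons_zero (p : Fin (n + 1)) (e : Equiv.Perm (Fin n)) : permCons p e 0 = p := by
  simp [permCons]

@[simp] lemma permCons_succ (p : Fin (n + 1)) (e : Equiv.Perm (Fin n)) (i : Fin n) :
    permCons p e i.succ = p.succAbove (e i) := by
  simp [permCons]

lemma code_permCons (p : Fin (n + 1)) (e : Equiv.Perm (Fin n)) :
    code (permCons p e) = Fin.cons (p : ℕ) (code e) := by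
  ext i
  cases i using Fin.cases with
  | zero => simpa using code_zero (permCons p e)
  | succ i => simp [code, Fin.card_filter_univ_succ, Fin.succAbove_lt_succAbove_iff]

lemma exists_code_eq : ∀ {n : ℕ} (μ : Fin n → ℕ), (∀ i : Fin n, μ i ≤ n - 1 - i) →
    ∃ w : Equiv.Perm (Fin n), code w = μ
  | 0, μ, _ => ⟨1, funext fun i => i.elim0⟩
  | n + 1, μ, hμ => by
    obtain ⟨e, he⟩ := exists_code_eq (Fin.tail μ) fun i => by
      have := hμ i.succ
      simp only [Fin.tail, Fin.val_succ] at this ⊢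
      omega
    refine ⟨permCons ⟨μ 0, by simpa using (hμ 0).trans_lt n.lt_succ_self⟩ e, ?_⟩
    rw [code_permCons, he]
    exact Fin.cons_self_tail μ

def boundedSeqs (n : ℕ) : Finset (Fin n → ℕ) :=
  Fintype.piFinset fun i => Iic (n - 1 - i)

lemma card_boundedSeqs (n : ℕ) : #(boundedSeqs n) = n ! := by
  calc #(boundedSeqs n) = ∏ j ∈ range n, (n - 1 - j + 1) := by
        simp [boundedSeqs, Fin.prod_univ_eq_prod_range (fun j => n - 1 - j + 1)]
    _ = n ! := by rw [prod_range_reflect (· + 1), prod_range_add_one_eq_factorial]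

lemma code_injective : Function.Injective (code : Equiv.Perm (Fin n) → Fin n → ℕ) := by
  have himage : univ.image code = boundedSeqs n := by
    refine subset_antisymm (fun μ hμ => ?_) fun μ hμ => ?_
    · obtain ⟨w, -, rfl⟩ := mem_image.1 hμ
      simpa [boundedSeqs] using code_le w
    · obtain ⟨w, rfl⟩ := exists_code_eq μ (by simpa [boundedSeqs] using hμ)
      exact mem_image_of_mem _ (mem_univ w)
  have hcard : #(univ.image (code (n := n))) = #(univ : Finset (Equiv.Perm (Fin n))) := by
    rw [himage, card_boundedSeqs, Finset.card_univ, Fintype.card_perm, Fintype.card_fin]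
  simpa using card_image_iff.1 hcard

/-- The code map is a bijection from 132-avoiding permutations of `S_n`
onto the set `C_n` of partitions `μ_1 ≥ ⋯ ≥ μ_n ≥ 0` with `μ_i ≤ n − i`
(0-based: `μ i ≤ n − 1 − i`). -/
theorem stmt4 (n : ℕ) :
    Set.BijOn (fun w : Equiv.Perm (Fin n) => code w)
      {w | Avoids132 w}
      {μ : Fin n → ℕ |
        (∀ i j : Fin n, i ≤ j → μ j ≤ μ i) ∧ ∀ i : Fin n, μ i ≤ n - 1 - (i : ℕ)} := by
  refine ⟨fun w hw => ⟨avoids132_iff_antitone_code.1 hw, code_le w⟩, code_injective.injOn, ?_⟩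
  rintro μ ⟨hanti, hbound⟩
  obtain ⟨w, rfl⟩ := exists_code_eq μ hbound
  exact ⟨w, avoids132_iff_antitone_code.2 hanti, rfl⟩
end

section
/- For a 132-avoiding permutation w ∈ S_n with code (c_1,…,c_n): w_i > w_{i+1} if and only if c_i > c_{i+1}, and w_i < w_{i+1} if and only if c_i = c_{i+1}. -/
/-- For a 132-avoiding permutation, `w_i > w_{i+1}` iff `c_i > c_{i+1}`,
and `w_i < w_{i+1}` iff `c_i = c_{i+1}`. -/
theorem stmt5 (n : ℕ) (w : Equiv.Perm (Fin n)) (h : Avoids132 w)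
    (i j : Fin n) (hij : (j : ℕ) = (i : ℕ) + 1) :
    (w j < w i ↔ code w j < code w i) ∧ (w i < w j ↔ code w i = code w j) := by
  have hilt : i < j := by rw [Fin.lt_def]; omega
  have hne : w i ≠ w j := fun e => absurd (w.injective e) (Fin.ne_of_lt hilt)
  have hdesc : w j < w i → code w j < code w i := by
    intro hd
    apply Finset.card_lt_card
    constructor
    · intro k hk
      simp only [Finset.mem_filter, Finset.mem_univ, true_and] at hk ⊢
      exact ⟨hilt.trans hk.1, hk.2.trans hd⟩
    · intro hsub
      have hjmem : j ∈ Finset.univ.filter fun k => i < k ∧ w k < w i := by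
        simp [hilt, hd]
      have := hsub hjmem
      simp at this
  have hasc : w i < w j → code w i = code w j := by
    intro ha
    unfold code
    congr 1
    ext k
    simp only [Finset.mem_filter, Finset.mem_univ, true_and]
    constructor
    · rintro ⟨h1, h2⟩
      have hkne : k ≠ j := by
        intro e; rw [e] at h2; exact absurd (h2.trans ha) (lt_irrefl _)
      have hjk : j < k := by
        rw [Fin.lt_def] at h1 ⊢
        have : (k : ℕ) ≠ (j : ℕ) := fun e => hkne (Fin.ext e)
        omega
      exact ⟨hjk, h2.trans ha⟩
    · rintro ⟨h1, h2⟩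
      refine ⟨hilt.trans h1, ?_⟩
      by_contra hnk
      have hik : w i < w k := by
        rcases lt_or_eq_of_le (not_lt.mp hnk) with h' | h'
        · exact h'
        · exact absurd (w.injective h') (Fin.ne_of_lt (hilt.trans h1))
      exact h ⟨i, j, k, hilt, h1, hik, h2⟩
  refine ⟨⟨hdesc, fun hc => ?_⟩, ⟨hasc, fun hc => ?_⟩⟩
  · rcases lt_trichotomy (w i) (w j) with h' | h' | h'
    · exact absurd hc (by rw [hasc h']; exact lt_irrefl _)
    · exact absurd h' hne
    · exact h'
  · rcases lt_trichotomy (w i) (w j) with h' | h' | h'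
    · exact h'
    · exact absurd h' hne
    · exact absurd hc (Nat.ne_of_gt (hdesc h'))
end

section
/- A permutation w ∈ S_n is 132-avoiding and 231-avoiding if and only if its code (c_1,…,c_n) is a strict partition, i.e., c_1 > c_2 > ⋯ > c_k = c_{k+1} = ⋯ = c_n = 0 for some k. -/
/-- `w` is 231-avoiding: no indices `i < j < k` with `w k < w i < w j`. -/
def Avoids231 {n : ℕ} (w : Equiv.Perm (Fin n)) : Prop :=
  ¬ ∃ i j k : Fin n, i < j ∧ j < k ∧ w k < w i ∧ w i < w j

lemma Fin.add_le_add_of_strictAntiOn_Icc {n : ℕ} {f : Fin n → ℕ} {i j : Fin n} (hij : i ≤ j)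
    (hf : StrictAntiOn f (Set.Icc i j)) : f j + j ≤ f i + i := by
  have hmaps : Set.MapsTo f ↑(Finset.Icc i j) ↑(Finset.Icc (f j) (f i)) := fun t ht => by
    simp only [Finset.coe_Icc, Set.mem_Icc] at ht ⊢
    exact ⟨hf.antitoneOn ht ⟨hij, le_rfl⟩ ht.2, hf.antitoneOn ⟨le_rfl, hij⟩ ht ht.1⟩
  have hcard := Finset.card_le_card_of_injOn f hmaps (by simpa using hf.injOn)
  rw [Fin.card_Icc, Nat.card_Icc] at hcard
  have : (i : ℕ) ≤ j := hij
  omega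

section Code

variable {n : ℕ} {w : Equiv.Perm (Fin n)} {i j : Fin n}

lemma code_ne_zero_iff : code w i ≠ 0 ↔ ∃ t, i < t ∧ w t < w i := by
  simp [code, Finset.card_eq_zero, Finset.filter_eq_empty_iff]

lemma code_last (w : Equiv.Perm (Fin (n + 1))) : code w (Fin.last n) = 0 := by
  by_contra h
  obtain ⟨t, ht, -⟩ := code_ne_zero_iff.mp h
  exact (Fin.le_last t).not_gt ht

lemma code_lt_code_of_lt_of_apply_lt (hij : i < j) (hw : w j < w i) : code w j < code w i := by
  have hsub : insert j (Finset.univ.filter fun t => j < t ∧ w t < w j)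
      ⊆ Finset.univ.filter fun t => i < t ∧ w t < w i := by
    intro t ht
    simp only [Finset.mem_insert, Finset.mem_filter, Finset.mem_univ, true_and] at ht ⊢
    rcases ht with rfl | ⟨hjt, hwt⟩
    · exact ⟨hij, hw⟩
    · exact ⟨hij.trans hjt, hwt.trans hw⟩
  simpa [code] using Finset.card_le_card hsub

/-- Every inversion at `i` is either an inversion at `j` or lies strictly between `i` and `j`. -/
lemma code_add_lt_code_add_of_lt_of_apply_lt (hij : i < j) (hw : w i < w j) :
    code w i + i < code w j + j := by
  have hsub : (Finset.univ.filter fun t => i < t ∧ w t < w i)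
      ⊆ (Finset.univ.filter fun t => j < t ∧ w t < w j) ∪ Finset.Ioo i j := by
    intro t ht
    simp only [Finset.mem_filter, Finset.mem_univ, true_and, Finset.mem_union,
      Finset.mem_Ioo] at ht ⊢
    obtain ⟨hit, hwt⟩ := ht
    rcases lt_or_ge j t with hjt | htj
    · exact Or.inl ⟨hjt, hwt.trans hw⟩
    · exact Or.inr ⟨hit, htj.lt_of_ne (by rintro rfl; exact hw.not_gt hwt)⟩
  have hcard : code w i ≤ code w j + (Finset.Ioo i j).card :=
    (Finset.card_le_card hsub).trans (Finset.card_union_le _ _)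
  rw [Fin.card_Ioo] at hcard
  have : (i : ℕ) < j := hij
  omega

lemma avoids132_and_avoids231_iff :
    Avoids132 w ∧ Avoids231 w ↔ ∀ i j, i < j → code w j ≠ 0 → w j < w i := by
  constructor
  · rintro ⟨h132, h231⟩ i j hij hj
    obtain ⟨t, hjt, hwt⟩ := code_ne_zero_iff.mp hj
    refine (lt_or_gt_of_ne (w.injective.ne hij.ne')).resolve_right fun hwij => ?_
    rcases lt_or_gt_of_ne (w.injective.ne (hij.trans hjt).ne) with hit | hti
    · exact h132 ⟨i, j, t, hij, hjt, hit, hwt⟩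
    · exact h231 ⟨i, j, t, hij, hjt, hti, hwij⟩
  · intro h
    constructor
    · rintro ⟨i, j, t, hij, hjt, hit, htj⟩
      exact (h i j hij (code_ne_zero_iff.mpr ⟨t, hjt, htj⟩)).not_gt (hit.trans htj)
    · rintro ⟨i, j, t, hij, hjt, hti, hij'⟩
      exact (h i j hij (code_ne_zero_iff.mpr ⟨t, hjt, hti.trans hij'⟩)).not_gt hij'

lemma exists_code_eq_zero_iff_le (h : ∀ i j, i < j → code w j ≠ 0 → w j < w i)
    (hzero : ∃ i, code w i = 0) : ∃ i₀, ∀ i, code w i = 0 ↔ i₀ ≤ i := by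
  obtain ⟨i₀, hi₀, hmin⟩ := exists_minimal_of_wellFoundedLT _ hzero
  refine ⟨i₀, fun i => ⟨fun hi => not_lt.mp fun hlt => ?_, fun hle => ?_⟩⟩
  · exact hlt.not_ge (hmin hi hlt.le)
  · rcases hle.lt_or_eq with hlt | rfl
    · by_contra hi
      have := code_lt_code_of_lt_of_apply_lt hlt (h i₀ i hlt hi)
      omega
    · exact hi₀

end Code

/-- `w` is 132- and 231-avoiding iff its code is a strict partition:
`c_1 > c_2 > ⋯ > c_k = c_{k+1} = ⋯ = c_n = 0` for some `k` (1-based; here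
0-based indices, so strictly decreasing on indices `< k` and zero from `k − 1` on). -/
theorem stmt7 (n : ℕ) (hn : 1 ≤ n) (w : Equiv.Perm (Fin n)) :
    (Avoids132 w ∧ Avoids231 w) ↔
      ∃ k : ℕ, 1 ≤ k ∧ k ≤ n ∧
        (∀ i j : Fin n, (i : ℕ) < (j : ℕ) → (j : ℕ) ≤ k - 1 → code w j < code w i) ∧
        (∀ i : Fin n, k - 1 ≤ (i : ℕ) → code w i = 0) := by
  rw [avoids132_and_avoids231_iff]
  constructor
  · intro h
    obtain ⟨m, rfl⟩ := Nat.exists_eq_add_of_le' hn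
    obtain ⟨i₀, hi₀⟩ := exists_code_eq_zero_iff_le h ⟨_, code_last w⟩
    refine ⟨i₀ + 1, by omega, i₀.isLt, fun i j hij hj => ?_, fun i hi => (hi₀ i).mpr hi⟩
    have hi : code w i ≠ 0 := fun hi => by have := (hi₀ i).mp hi; omega
    by_cases hj0 : code w j = 0
    · omega
    · exact code_lt_code_of_lt_of_apply_lt hij (h i j hij hj0)
  · rintro ⟨k, -, -, hdec, hzero⟩ i j hij hj
    refine (lt_or_gt_of_ne (w.injective.ne hij.ne')).resolve_right fun hwij => ?_
    have hjk : (j : ℕ) ≤ k - 1 := by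
      by_contra hjk
      exact hj (hzero j (by omega))
    have hanti : StrictAntiOn (code w) (Set.Icc i j) := fun a ha b hb hab =>
      hdec a b hab ((show (b : ℕ) ≤ j from hb.2).trans hjk)
    exact (Fin.add_le_add_of_strictAntiOn_Icc hij.le hanti).not_gt
      (code_add_lt_code_add_of_lt_of_apply_lt hij hwij)
end

section
/- The number of permutations in S_n that are both 132-avoiding and 231-avoiding equals 2^{n−1}. -/
/-- no interior "peak" -/
def NoPeak {n : ℕ} (w : Equiv.Perm (Fin n)) : Prop :=
  ¬ ∃ i j k : Fin n, i < j ∧ j < k ∧ w i < w j ∧ w k < w j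

theorem avoids_iff_noPeak {n : ℕ} (w : Equiv.Perm (Fin n)) :
    (Avoids132 w ∧ Avoids231 w) ↔ NoPeak w := by
  constructor
  · rintro ⟨h1, h2⟩ ⟨i, j, k, hij, hjk, h3, h4⟩
    rcases lt_trichotomy (w i) (w k) with h | h | h
    · exact h1 ⟨i, j, k, hij, hjk, h, h4⟩
    · exact absurd (w.injective h) (ne_of_lt (hij.trans hjk))
    · exact h2 ⟨i, j, k, hij, hjk, h, h3⟩
  · intro h
    constructor
    · rintro ⟨i, j, k, hij, hjk, h1, h2⟩
      exact h ⟨i, j, k, hij, hjk, h1.trans h2, h2⟩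
    · rintro ⟨i, j, k, hij, hjk, h1, h2⟩
      exact h ⟨i, j, k, hij, hjk, h2, h1.trans h2⟩

/-- extend a permutation of `Fin n` to `Fin (n+1)` by putting the new max value at position 0 -/
def ext0 {n : ℕ} (u : Equiv.Perm (Fin n)) : Equiv.Perm (Fin (n + 1)) where
  toFun i := if h : i = 0 then Fin.last n else (u (i.pred h)).castSucc
  invFun v := if h : v = Fin.last n then 0 else (u.symm (v.castPred h)).succ
  left_inv i := by
    by_cases h : i = 0
    · simp [h]
    · simp [h, (Fin.castSucc_lt_last _).ne]
  right_inv v := by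
    by_cases h : v = Fin.last n
    · simp [h]
    · simp [h, Fin.succ_ne_zero]

/-- extend a permutation of `Fin n` to `Fin (n+1)` by putting the new max value at the last
position -/
def extLast {n : ℕ} (u : Equiv.Perm (Fin n)) : Equiv.Perm (Fin (n + 1)) where
  toFun i := if h : i = Fin.last n then Fin.last n else (u (i.castPred h)).castSucc
  invFun v := if h : v = Fin.last n then Fin.last n else (u.symm (v.castPred h)).castSucc
  left_inv i := by
    by_cases h : i = Fin.last n
    · simp [h]
    · simp [h, (Fin.castSucc_lt_last _).ne]
  right_inv v := by
    by_cases h : v = Fin.last n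
    · simp [h]
    · simp [h, (Fin.castSucc_lt_last _).ne]

lemma ext0_apply_zero {n : ℕ} (u : Equiv.Perm (Fin n)) : ext0 u 0 = Fin.last n := by
  simp [ext0, Equiv.coe_fn_mk]

lemma ext0_apply_succ {n : ℕ} (u : Equiv.Perm (Fin n)) (i : Fin n) :
    ext0 u i.succ = (u i).castSucc := by
  simp [ext0, Equiv.coe_fn_mk, Fin.succ_ne_zero]

lemma ext0_apply_ne_zero {n : ℕ} (u : Equiv.Perm (Fin n)) (i : Fin (n + 1)) (h : i ≠ 0) :
    ext0 u i = (u (i.pred h)).castSucc := by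
  simp [ext0, Equiv.coe_fn_mk, h]

lemma extLast_apply_last {n : ℕ} (u : Equiv.Perm (Fin n)) : extLast u (Fin.last n) = Fin.last n := by
  simp [extLast, Equiv.coe_fn_mk]

lemma extLast_apply_castSucc {n : ℕ} (u : Equiv.Perm (Fin n)) (i : Fin n) :
    extLast u i.castSucc = (u i).castSucc := by
  simp [extLast, Equiv.coe_fn_mk, (Fin.castSucc_lt_last _).ne]

lemma extLast_apply_ne_last {n : ℕ} (u : Equiv.Perm (Fin n)) (i : Fin (n + 1))
    (h : i ≠ Fin.last n) : extLast u i = (u (i.castPred h)).castSucc := by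
  simp [extLast, Equiv.coe_fn_mk, h]

lemma noPeak_ext0 {n : ℕ} (u : Equiv.Perm (Fin n)) : NoPeak (ext0 u) ↔ NoPeak u := by
  constructor
  · intro h ⟨i, j, k, hij, hjk, h1, h2⟩
    refine h ⟨i.succ, j.succ, k.succ, by simpa using hij, by simpa using hjk, ?_, ?_⟩ <;>
      simp [ext0_apply_succ, h1, h2]
  · intro h ⟨i, j, k, hij, hjk, h1, h2⟩
    have hi : i ≠ 0 := by
      rintro rfl
      rw [ext0_apply_zero] at h1
      exact absurd h1 (Fin.le_last _).not_gt
    have hj : j ≠ 0 := (Fin.pos_of_ne_zero hi |>.trans hij).ne'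
    have hk : k ≠ 0 := ((Fin.pos_of_ne_zero hi).trans (hij.trans hjk)).ne'
    rw [ext0_apply_ne_zero u i hi, ext0_apply_ne_zero u j hj] at h1
    rw [ext0_apply_ne_zero u k hk, ext0_apply_ne_zero u j hj] at h2
    refine h ⟨i.pred hi, j.pred hj, k.pred hk, ?_, ?_, ?_, ?_⟩
    · rwa [Fin.pred_lt_pred_iff]
    · rwa [Fin.pred_lt_pred_iff]
    · rwa [Fin.castSucc_lt_castSucc_iff] at h1
    · rwa [Fin.castSucc_lt_castSucc_iff] at h2

lemma noPeak_extLast {n : ℕ} (u : Equiv.Perm (Fin n)) : NoPeak (extLast u) ↔ NoPeak u := by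
  constructor
  · intro h ⟨i, j, k, hij, hjk, h1, h2⟩
    refine h ⟨i.castSucc, j.castSucc, k.castSucc, by simpa using hij, by simpa using hjk, ?_, ?_⟩ <;>
      simp [extLast_apply_castSucc, h1, h2]
  · intro h ⟨i, j, k, hij, hjk, h1, h2⟩
    have hk : k ≠ Fin.last n := by
      rintro rfl
      rw [extLast_apply_last] at h2
      exact absurd h2 (Fin.le_last _).not_gt
    have hj : j ≠ Fin.last n := (hjk.trans_le (Fin.le_last _)).ne
    have hi : i ≠ Fin.last n := ((hij.trans hjk).trans_le (Fin.le_last _)).ne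
    rw [extLast_apply_ne_last u i hi, extLast_apply_ne_last u j hj] at h1
    rw [extLast_apply_ne_last u k hk, extLast_apply_ne_last u j hj] at h2
    refine h ⟨i.castPred hi, j.castPred hj, k.castPred hk, ?_, ?_, ?_, ?_⟩
    · simpa using hij
    · simpa using hjk
    · rwa [Fin.castSucc_lt_castSucc_iff] at h1
    · rwa [Fin.castSucc_lt_castSucc_iff] at h2

/-- in a no-peak permutation of `Fin (n+1)`, the max value sits first or last -/
lemma noPeak_symm_last {n : ℕ} (w : Equiv.Perm (Fin (n + 1))) (hw : NoPeak w) :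
    w.symm (Fin.last n) = 0 ∨ w.symm (Fin.last n) = Fin.last n := by
  by_contra hcon
  push_neg at hcon
  obtain ⟨h0, hl⟩ := hcon
  set j := w.symm (Fin.last n) with hj
  have hwj : w j = Fin.last n := w.apply_symm_apply _
  refine hw ⟨0, j, Fin.last n, Fin.pos_of_ne_zero h0, lt_of_le_of_ne (Fin.le_last _) hl, ?_, ?_⟩
  · rw [hwj]
    exact lt_of_le_of_ne (Fin.le_last _) fun h => h0 (w.injective (h.trans hwj.symm) ▸ rfl)
  · rw [hwj]
    exact lt_of_le_of_ne (Fin.le_last _) fun h => hl (w.injective (h.trans hwj.symm) ▸ rfl)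

/-- restrict a permutation of `Fin (n+1)` whose value at 0 is max -/
def res0 {n : ℕ} (w : Equiv.Perm (Fin (n + 1))) (hw : w 0 = Fin.last n) : Equiv.Perm (Fin n) where
  toFun i := (w i.succ).castPred (fun h => Fin.succ_ne_zero i (w.injective (h.trans hw.symm)))
  invFun v := (w.symm v.castSucc).pred (fun h => (Fin.castSucc_lt_last v).ne
    (by rw [← w.apply_symm_apply v.castSucc, h, hw]))
  left_inv i := by simp
  right_inv v := by simp

lemma ext0_res0 {n : ℕ} (w : Equiv.Perm (Fin (n + 1))) (hw : w 0 = Fin.last n) :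
    ext0 (res0 w hw) = w := by
  ext i
  by_cases h : i = 0
  · subst h; rw [ext0_apply_zero, hw]
  · rw [ext0_apply_ne_zero _ i h]
    simp [res0]

/-- restrict a permutation of `Fin (n+1)` whose value at the last position is max -/
def resLast {n : ℕ} (w : Equiv.Perm (Fin (n + 1))) (hw : w (Fin.last n) = Fin.last n) :
    Equiv.Perm (Fin n) where
  toFun i := (w i.castSucc).castPred (fun h => (Fin.castSucc_lt_last i).ne (w.injective (h.trans hw.symm)))
  invFun v := (w.symm v.castSucc).castPred (fun h => (Fin.castSucc_lt_last v).ne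
    (by rw [← w.apply_symm_apply v.castSucc, h, hw]))
  left_inv i := by simp
  right_inv v := by simp

lemma extLast_resLast {n : ℕ} (w : Equiv.Perm (Fin (n + 1))) (hw : w (Fin.last n) = Fin.last n) :
    extLast (resLast w hw) = w := by
  ext i
  by_cases h : i = Fin.last n
  · subst h; rw [extLast_apply_last, hw]
  · rw [extLast_apply_ne_last _ i h]
    simp [resLast]

/-- the counting step -/
lemma card_step (n : ℕ) (hn : 1 ≤ n) :
    Nat.card {w : Equiv.Perm (Fin (n + 1)) // NoPeak w} =
      2 * Nat.card {w : Equiv.Perm (Fin n) // NoPeak w} := by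
  classical
  have key : Nat.card ({w : Equiv.Perm (Fin n) // NoPeak w} ⊕ {w : Equiv.Perm (Fin n) // NoPeak w})
      = Nat.card {w : Equiv.Perm (Fin (n + 1)) // NoPeak w} := by
    apply Nat.card_eq_of_bijective
      (f := fun x => Sum.elim
        (fun u => (⟨ext0 u.1, (noPeak_ext0 u.1).mpr u.2⟩ : {w : Equiv.Perm (Fin (n + 1)) // NoPeak w}))
        (fun u => ⟨extLast u.1, (noPeak_extLast u.1).mpr u.2⟩) x)
    constructor
    · rintro (⟨u, hu⟩ | ⟨u, hu⟩) (⟨v, hv⟩ | ⟨v, hv⟩) h <;>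
        simp only [Sum.elim_inl, Sum.elim_inr, Subtype.mk.injEq] at h
      · have huv : u = v := by
          ext i
          have hh := Equiv.ext_iff.mp h i.succ
          rw [ext0_apply_succ, ext0_apply_succ] at hh
          exact congrArg Fin.val (Fin.castSucc_injective n hh)
        subst huv; rfl
      · exfalso
        have h0 : (0 : Fin (n + 1)) ≠ Fin.last n := by
          intro hc
          have := congrArg Fin.val hc
          simp at this
          omega
        have hh := Equiv.ext_iff.mp h 0
        rw [ext0_apply_zero, extLast_apply_ne_last v 0 h0] at hh
        exact (Fin.castSucc_lt_last _).ne hh.symm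
      · exfalso
        have h0 : (0 : Fin (n + 1)) ≠ Fin.last n := by
          intro hc
          have := congrArg Fin.val hc
          simp at this
          omega
        have hh := (Equiv.ext_iff.mp h 0).symm
        rw [ext0_apply_zero, extLast_apply_ne_last u 0 h0] at hh
        exact (Fin.castSucc_lt_last _).ne hh.symm
      · have huv : u = v := by
          ext i
          have hh := Equiv.ext_iff.mp h i.castSucc
          rw [extLast_apply_castSucc, extLast_apply_castSucc] at hh
          exact congrArg Fin.val (Fin.castSucc_injective n hh)
        subst huv; rfl
    · rintro ⟨w, hw⟩
      rcases noPeak_symm_last w hw with h | h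
      · have hw0 : w 0 = Fin.last n := by rw [← h, Equiv.apply_symm_apply]
        refine ⟨Sum.inl ⟨res0 w hw0, ?_⟩, ?_⟩
        · rw [← noPeak_ext0, ext0_res0]; exact hw
        · simp only [Sum.elim_inl]
          exact Subtype.ext (ext0_res0 w hw0)
      · have hwl : w (Fin.last n) = Fin.last n := by
          have := w.apply_symm_apply (Fin.last n)
          rwa [h] at this
        refine ⟨Sum.inr ⟨resLast w hwl, ?_⟩, ?_⟩
        · rw [← noPeak_extLast, extLast_resLast]; exact hw
        · simp only [Sum.elim_inr]
          exact Subtype.ext (extLast_resLast w hwl)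
  rw [← key, Nat.card_sum, two_mul]

lemma card_base : Nat.card {w : Equiv.Perm (Fin 1) // NoPeak w} = 1 := by
  have : ∀ w : Equiv.Perm (Fin 1), NoPeak w := by
    rintro w ⟨i, j, k, hij, hjk, -, -⟩
    exact absurd (Subsingleton.elim i j) hij.ne
  haveI : Unique {w : Equiv.Perm (Fin 1) // NoPeak w} :=
    { default := ⟨1, this 1⟩
      uniq := fun w => Subtype.ext (Subsingleton.elim _ _) }
  exact Nat.card_unique

lemma card_noPeak : ∀ m : ℕ, Nat.card {w : Equiv.Perm (Fin (m + 1)) // NoPeak w} = 2 ^ m := by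
  intro m
  induction m with
  | zero => exact card_base
  | succ k ih => rw [card_step (k + 1) (Nat.le_add_left 1 k), ih, pow_succ, Nat.mul_comm]

/-- There are exactly `2^{n−1}` permutations in `S_n` that are both
132-avoiding and 231-avoiding. -/
theorem stmt8 (n : ℕ) (hn : 1 ≤ n) :
    Nat.card {w : Equiv.Perm (Fin n) // Avoids132 w ∧ Avoids231 w} = 2 ^ (n - 1) := by
  obtain ⟨m, rfl⟩ : ∃ m, n = m + 1 := ⟨n - 1, by omega⟩
  have e : {w : Equiv.Perm (Fin (m + 1)) // Avoids132 w ∧ Avoids231 w} ≃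
      {w : Equiv.Perm (Fin (m + 1)) // NoPeak w} :=
    Equiv.subtypeEquivRight fun w => avoids_iff_noPeak w
  rw [Nat.card_congr e, card_noPeak m]
  simp
end

section
/- If w ∈ S_n is 132-avoiding and 231-avoiding with code having nonzero entries c_1 > ⋯ > c_{k−1} > 0, then the permutation w·w₀ (where w₀ is the longest element of S_n) is also 132-avoiding and 231-avoiding, and the set of nonzero entries of the code of w·w₀ is the complement of {c_1,…,c_{k−1}} inside {1,…,n−1}. -/
namespace Stmt9Aux

variable {n : ℕ} {w : Equiv.Perm (Fin n)}

lemma noPeak (h1 : Avoids132 w) (h2 : Avoids231 w)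
    {i j k : Fin n} (hij : i < j) (hjk : j < k) (hi : w i < w j) : w j < w k := by
  rcases lt_or_ge (w j) (w k) with h | h
  · exact h
  have hkj : w k < w j := h.lt_of_ne (fun e => hjk.ne' (w.injective e))
  rcases lt_trichotomy (w i) (w k) with h' | h' | h'
  · exact absurd ⟨i, j, k, hij, hjk, h', hkj⟩ h1
  · exact absurd (w.injective h') (hij.trans hjk).ne
  · exact absurd ⟨i, j, k, hij, hjk, h', hi⟩ h2

variable {z : Fin n} (hz : ∀ x, w z ≤ w x)

include hz in
lemma desc (h1 : Avoids132 w) (h2 : Avoids231 w)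
    {i j : Fin n} (hij : i < j) (hjz : j ≤ z) : w j < w i := by
  rcases eq_or_lt_of_le hjz with rfl | hjz
  · exact (hz i).lt_of_ne (fun e => hij.ne' (w.injective e))
  · by_contra h
    have hwi : w i < w j :=
      (le_of_not_gt h).lt_of_ne (fun e => hij.ne (w.injective e))
    exact absurd (noPeak h1 h2 hij hjz hwi) (not_lt.2 (hz j))

include hz in
lemma asc (h1 : Avoids132 w) (h2 : Avoids231 w)
    {i j : Fin n} (hzi : z ≤ i) (hij : i < j) : w i < w j := by
  rcases eq_or_lt_of_le hzi with rfl | hzi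
  · exact (hz j).lt_of_ne (fun e => hij.ne (w.injective e))
  · exact noPeak h1 h2 hzi hij ((hz i).lt_of_ne (fun e => hzi.ne (w.injective e)))

include hz in
lemma code_asc (h1 : Avoids132 w) (h2 : Avoids231 w)
    {i : Fin n} (hzi : z ≤ i) : code w i = 0 := by
  rw [code, Finset.card_eq_zero, Finset.filter_eq_empty_iff]
  rintro j - ⟨hij, hji⟩
  exact absurd (asc hz h1 h2 hzi hij) (not_lt.2 hji.le)

include hz in
lemma code_desc (h1 : Avoids132 w) (h2 : Avoids231 w)
    {i : Fin n} (hiz : i < z) : code w i = (w i : ℕ) := by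
  have hset : (Finset.univ.filter fun j => i < j ∧ w j < w i)
      = Finset.univ.filter fun j => w j < w i := by
    apply Finset.filter_congr
    intro j _
    constructor
    · exact fun h => h.2
    · intro h
      refine ⟨?_, h⟩
      rcases lt_trichotomy i j with h' | rfl | h'
      · exact h'
      · exact absurd h (lt_irrefl _)
      · exact absurd (desc hz h1 h2 h' hiz.le) (not_lt.2 h.le)
  rw [code, hset]
  have : (Finset.univ.filter fun j => w j < w i).card
      = (Finset.univ.filter fun v => v < w i).card := by
    apply Finset.card_bij (fun j _ => w j)
    · intro a ha; simp at ha ⊢; exact ha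
    · intro a _ b _ h; exact w.injective h
    · intro b hb; simp at hb ⊢; exact ⟨w.symm b, by simp [hb]⟩
  rw [this]
  have : (Finset.univ.filter fun v => v < w i) = Finset.Iio (w i) := by
    ext v; simp
  rw [this, Fin.card_Iio]

include hz in
lemma exists_code_iff (h1 : Avoids132 w) (h2 : Avoids231 w)
    {m : Fin n} (hm0 : (m : ℕ) ≠ 0) :
    (∃ i, code w i = (m : ℕ)) ↔ w.symm m < z := by
  constructor
  · rintro ⟨i, hi⟩
    have hiz : i < z := by
      by_contra h
      rw [code_asc hz h1 h2 (not_lt.1 h)] at hi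
      exact hm0 hi.symm
    rw [code_desc hz h1 h2 hiz] at hi
    have hwi : w i = m := Fin.ext hi
    rw [← hwi, Equiv.symm_apply_apply]
    exact hiz
  · intro h
    exact ⟨w.symm m, by rw [code_desc hz h1 h2 h, Equiv.apply_symm_apply]⟩

end Stmt9Aux


/-- If `w` is 132- and 231-avoiding, then so is `w·w₀` (where `w₀ = Fin.revPerm`
is the longest element), and the set of nonzero code entries of `w·w₀` is the
complement in `{1,…,n−1}` of the set of nonzero code entries of `w`. -/
theorem stmt9 (n : ℕ) (w : Equiv.Perm (Fin n))
    (h1 : Avoids132 w) (h2 : Avoids231 w) :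
    Avoids132 (w * Fin.revPerm) ∧ Avoids231 (w * Fin.revPerm) ∧
      ∀ m : ℕ, 1 ≤ m → m ≤ n - 1 →
        ((∃ i, code (w * Fin.revPerm) i = m) ↔ ¬ ∃ i, code w i = m) := by
  set w' : Equiv.Perm (Fin n) := w * Fin.revPerm with hw'
  have happ : ∀ x : Fin n, w' x = w x.rev := fun x => rfl
  have h1' : Avoids132 w' := by
    rintro ⟨i, j, k, hij, hjk, ha, hb⟩
    rw [happ] at ha hb
    exact h2 ⟨k.rev, j.rev, i.rev, Fin.rev_lt_rev.2 hjk, Fin.rev_lt_rev.2 hij, ha, hb⟩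
  have h2' : Avoids231 w' := by
    rintro ⟨i, j, k, hij, hjk, ha, hb⟩
    rw [happ] at ha hb
    exact h1 ⟨k.rev, j.rev, i.rev, Fin.rev_lt_rev.2 hjk, Fin.rev_lt_rev.2 hij, ha, hb⟩
  refine ⟨h1', h2', fun m hm1 hmn => ?_⟩
  have hn : 2 ≤ n := by omega
  set mf : Fin n := ⟨m, by omega⟩ with hmf
  have hm0 : (mf : ℕ) ≠ 0 := by simp [hmf]; omega
  set zero : Fin n := ⟨0, by omega⟩ with hzero
  set z : Fin n := w.symm zero with hzdef
  have hz : ∀ x, w z ≤ w x := by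
    intro x
    rw [hzdef, Equiv.apply_symm_apply]
    exact Fin.mk_le_of_le_val (Nat.zero_le _)
  set z' : Fin n := w'.symm zero with hz'def
  have hz'eq : z' = z.rev := by
    rw [hz'def, hzdef]
    rfl
  have hz' : ∀ x, w' z' ≤ w' x := by
    intro x
    rw [hz'def, Equiv.apply_symm_apply]
    exact Fin.mk_le_of_le_val (Nat.zero_le _)
  have hsymm' : w'.symm mf = (w.symm mf).rev := rfl
  have hne : w.symm mf ≠ z := by
    rw [hzdef]
    intro h
    have := w.symm.injective h
    rw [Fin.ext_iff] at this
    simp [hmf, hzero] at this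
    omega
  rw [show (∃ i, code w' i = m) ↔
        (∃ i, code w' i = (mf : ℕ)) from Iff.rfl,
      show (∃ i, code w i = m) ↔ (∃ i, code w i = (mf : ℕ)) from Iff.rfl,
      Stmt9Aux.exists_code_iff hz' h1' h2' hm0,
      Stmt9Aux.exists_code_iff hz h1 h2 hm0, hsymm', hz'eq, Fin.rev_lt_rev]
  rcases lt_trichotomy (w.symm mf) z with h | h | h
  · simp [h, not_lt.2 h.le]
  · exact absurd h hne
  · simp [h, not_lt.2 h.le]
end

section
/- The number of parking functions of length r equals (r+1)^{r−1}. -/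
open Finset

lemma cycle_lemma (n : ℕ) (hn : 0 < n) (G : ℕ → ℤ) (hG : ∀ t, G (t + n) = G t - 1) :
    ∃! d : ℕ, d < n ∧ ∀ t, 1 ≤ t → t < n → G d ≤ G (d + t) := by
  -- minimum of G over range n
  obtain ⟨m, hmmem, hmle⟩ := ((range n).image G).exists_min_image id (by
    simp [Finset.image_nonempty, Finset.nonempty_range_iff]; omega)
  simp only [mem_image, mem_range] at hmmem
  obtain ⟨d0, hd0, hGd0⟩ := hmmem
  -- least index attaining the min
  have hex : ∃ d, d < n ∧ G d = m := ⟨d0, hd0, hGd0⟩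
  classical
  set d := Nat.find hex with hd
  obtain ⟨hdn, hGd⟩ := Nat.find_spec hex
  have hfirst : ∀ j, j < d → G j ≠ m := by
    intro j hj
    have := Nat.find_min hex hj
    intro h
    exact this ⟨by omega, h⟩
  have hmin : ∀ j, j < n → m ≤ G j := by
    intro j hj
    have := hmle (G j) (mem_image_of_mem G (mem_range.mpr hj))
    simpa using this
  have hPd : ∀ t, 1 ≤ t → t < n → G d ≤ G (d + t) := by
    intro t ht1 htn
    by_cases h : d + t < n
    · rw [hGd]; exact hmin _ h
    · have hj : d + t - n < d := by omega
      have hjn : d + t - n < n := by omega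
      have : G (d + t) = G (d + t - n) - 1 := by
        have := hG (d + t - n)
        rw [show d + t - n + n = d + t by omega] at this
        exact this
      rw [this, hGd]
      have h1 : m ≤ G (d + t - n) := hmin _ hjn
      have h2 : G (d + t - n) ≠ m := hfirst _ hj
      omega
  refine ⟨d, ⟨hdn, hPd⟩, ?_⟩
  · -- uniqueness
    rintro d' ⟨hd'n, hP'⟩
    by_contra hne
    have key : ∀ e e', e < n → e' < n → (∀ t, 1 ≤ t → t < n → G e ≤ G (e + t)) →
        (∀ t, 1 ≤ t → t < n → G e' ≤ G (e' + t)) → e < e' → False := by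
      intro e e' hen he'n hPe hPe' hlt
      have h1 : G e ≤ G e' := by
        have := hPe (e' - e) (by omega) (by omega)
        rwa [show e + (e' - e) = e' by omega] at this
      have h2 : G e' ≤ G (e + n) := by
        have := hPe' (e + n - e') (by omega) (by omega)
        rwa [show e' + (e + n - e') = e + n by omega] at this
      rw [hG e] at h2
      omega
    rcases Nat.lt_or_ge d' d with h | h
    · exact key d' d hd'n hdn hP' hPd h
    · exact key d d' hdn hd'n hPd hP' (by omega)

lemma val_eq_iff_cast (n : ℕ) [NeZero n] (z : ZMod n) (j : ℕ) (hj : j < n) :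
    z.val = j ↔ z = (j : ZMod n) := by
  constructor
  · intro h
    have := ZMod.natCast_rightInverse (n := n) z
    rw [← this, h]
  · intro h; rw [h, ZMod.val_cast_of_lt hj]

def Good (r : ℕ) (a : Fin r → ZMod (r + 1)) : Prop :=
  ∀ m < r, m + 1 ≤ (Finset.univ.filter fun i => (a i).val ≤ m).card

section
variable (r : ℕ) (a : Fin r → ZMod (r + 1))

/-- count of indices with value `j mod (r+1)` -/
def cnt (j : ℕ) : ℕ := (Finset.univ.filter fun i => a i = (j : ZMod (r + 1))).card

lemma window (d t : ℕ) (ht : t ≤ r + 1) :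
    (Finset.univ.filter fun i => (a i - (d : ZMod (r + 1))).val < t).card
      = ∑ j ∈ Finset.range t, cnt r a (d + j) := by
  rw [Finset.card_eq_sum_card_fiberwise
    (f := fun i => (a i - (d : ZMod (r + 1))).val) (t := range t)
    (fun i hi => by simpa using (mem_filter.mp hi).2)]
  refine Finset.sum_congr rfl fun j hj => ?_
  rw [mem_range] at hj
  unfold cnt
  congr 1
  rw [Finset.filter_filter]
  apply Finset.filter_congr
  intro i _
  constructor
  · rintro ⟨-, h⟩
    have : a i - (d : ZMod (r+1)) = (j : ZMod (r+1)) :=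
      (val_eq_iff_cast _ _ j (by omega)).mp h
    push_cast
    rw [← this]; ring
  · intro h
    have : a i - (d : ZMod (r+1)) = (j : ZMod (r+1)) := by
      rw [h]; push_cast; ring
    have hv := (val_eq_iff_cast _ _ j (by omega)).mpr this
    exact ⟨by omega, hv⟩

lemma sum_cnt (d : ℕ) : ∑ j ∈ Finset.range (r + 1), cnt r a (d + j) = r := by
  have := window r a d (r + 1) le_rfl
  rw [← this]
  have : (Finset.univ.filter fun i => (a i - (d : ZMod (r + 1))).val < r + 1) = univ := by
    apply Finset.filter_true_of_mem
    intro i _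
    exact ZMod.val_lt _
  rw [this, card_univ, Fintype.card_fin]

/-- prefix sums minus t -/
def Gfun (t : ℕ) : ℤ := (∑ j ∈ Finset.range t, cnt r a j : ℕ) - t

lemma Gfun_period (t : ℕ) : Gfun r a (t + (r + 1)) = Gfun r a t - 1 := by
  unfold Gfun
  rw [Finset.sum_range_add]
  push_cast [sum_cnt r a t]
  ring
end

lemma good_iff_P (r : ℕ) (a : Fin r → ZMod (r + 1)) (c : ZMod (r + 1)) :
    Good r (fun i => a i + c) ↔
      (∀ t, 1 ≤ t → t < r + 1 → Gfun r a ((-c).val) ≤ Gfun r a ((-c).val + t)) := by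
  set d := (-c).val with hd
  have hdlt : d < r + 1 := ZMod.val_lt _
  have hdc : (d : ZMod (r + 1)) = -c := ZMod.natCast_rightInverse _
  have hfun : ∀ i, a i + c = a i - (d : ZMod (r + 1)) := by
    intro i; rw [hdc]; ring
  have hdiff : ∀ t, t ≤ r + 1 →
      Gfun r a (d + t) - Gfun r a d = (∑ j ∈ Finset.range t, cnt r a (d + j) : ℕ) - (t : ℤ) := by
    intro t ht
    unfold Gfun
    rw [Finset.sum_range_add]
    push_cast
    ring
  have hcards : ∀ m : ℕ, (Finset.univ.filter fun i => ((fun i => a i + c) i).val ≤ m).card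
      = (Finset.univ.filter fun i => (a i - (d : ZMod (r+1))).val < m + 1).card := by
    intro m
    congr 1
    apply Finset.filter_congr
    intro i _
    show (a i + c).val ≤ m ↔ _
    rw [hfun i]
    omega
  constructor
  · intro hg t ht1 htr
    have hm := hg (t - 1) (by omega)
    rw [hcards, show t - 1 + 1 = t by omega] at hm
    have hE := hdiff t (by omega)
    have hw := window r a d t (by omega)
    rw [hw] at hm
    have : (t : ℤ) ≤ (∑ j ∈ Finset.range t, cnt r a (d + j) : ℕ) := by exact_mod_cast hm
    linarith
  · intro hP m hm
    have hQ := hP (m + 1) (by omega) (by omega)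
    have hE := hdiff (m + 1) (by omega)
    have hw := window r a d (m + 1) (by omega)
    rw [hcards, hw]
    have h2 : (((m+1 : ℕ)) : ℤ) ≤ ((∑ j ∈ Finset.range (m+1), cnt r a (d + j) : ℕ) : ℤ) := by
      linarith
    exact_mod_cast h2

lemma key (r : ℕ) (a : Fin r → ZMod (r + 1)) :
    ∃! c : ZMod (r + 1), Good r (fun i => a i + c) := by
  obtain ⟨d, ⟨hdn, hPd⟩, huniq⟩ :=
    cycle_lemma (r + 1) (by omega) (Gfun r a) (Gfun_period r a)
  refine ⟨-(d : ZMod (r + 1)), ?_, ?_⟩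
  · show Good r fun i => a i + -(d : ZMod (r + 1))
    rw [good_iff_P, neg_neg, ZMod.val_cast_of_lt hdn]
    exact hPd
  · intro c' hc'
    have hc' : Good r fun i => a i + c' := hc'
    rw [good_iff_P] at hc'
    have := huniq ((-c').val) ⟨ZMod.val_lt _, hc'⟩
    have h2 : -c' = (d : ZMod (r + 1)) := by
      rw [← this]
      exact (ZMod.natCast_rightInverse _).symm
    rw [← h2, neg_neg]
/-- A parking function of length `r`: a sequence `(b_1,…,b_r)` with
`1 ≤ b_i ≤ r` and `#{i : b_i ≤ k} ≥ k` for all `k = 1,…,r`. -/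
def IsParking (r : ℕ) (b : Fin r → ℕ) : Prop :=
  (∀ i, 1 ≤ b i ∧ b i ≤ r) ∧
  ∀ k : ℕ, 1 ≤ k → k ≤ r → k ≤ (Finset.univ.filter fun i => b i ≤ k).card
noncomputable def shiftEquiv (r : ℕ) :
    (Fin r → ZMod (r + 1)) ≃ (ZMod (r + 1)) × {a : Fin r → ZMod (r + 1) // Good r a} := by
  classical
  have hsel : ∀ a : Fin r → ZMod (r + 1), Good r (fun i => a i + (key r a).exists.choose) :=
    fun a => (key r a).exists.choose_spec
  refine
    { toFun := fun a => ⟨(key r a).exists.choose, ⟨fun i => a i + (key r a).exists.choose, hsel a⟩⟩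
      invFun := fun p => fun i => p.2.1 i - p.1
      left_inv := ?_
      right_inv := ?_ }
  · intro a
    funext i
    simp
  · rintro ⟨c, ⟨g, hg⟩⟩
    have hgood : Good r (fun i => (fun j => g j - c) i + c) := by
      simpa using hg
    have huniq := (key r (fun j => g j - c)).unique (hsel _) hgood
    ext i
    · exact congrArg id huniq
    · show (g i - c) + (key r (fun j => g j - c)).exists.choose = g i
      rw [huniq]; ring

lemma card_good (r : ℕ) :
    (r + 1) * Nat.card {a : Fin r → ZMod (r + 1) // Good r a} = (r + 1) ^ r := by
  have h := Nat.card_congr (shiftEquiv r)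
  rw [Nat.card_prod] at h
  have hL : Nat.card (Fin r → ZMod (r + 1)) = (r + 1) ^ r := by
    simp [Nat.card_eq_fintype_card]
  have hZ : Nat.card (ZMod (r + 1)) = r + 1 := by
    simp [Nat.card_eq_fintype_card]
  rw [hL, hZ] at h
  exact h.symm

noncomputable def parkEquiv (r : ℕ) :
    {b : Fin r → ℕ // IsParking r b} ≃ {a : Fin r → ZMod (r + 1) // Good r a} := by
  classical
  have goodBound : ∀ (a : Fin r → ZMod (r + 1)), Good r a → ∀ i : Fin r, (a i).val + 1 ≤ r := by
    intro a ha i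
    have hr : 0 < r := i.pos
    have h := ha (r - 1) (by omega)
    have hall : (Finset.univ.filter fun j => (a j).val ≤ r - 1) = Finset.univ := by
      apply Finset.eq_univ_of_card
      have := Finset.card_le_univ (Finset.univ.filter fun j => (a j).val ≤ r - 1)
      simp only [Finset.card_univ, Fintype.card_fin] at this ⊢
      omega
    have : i ∈ Finset.univ.filter fun j => (a j).val ≤ r - 1 := by
      rw [hall]; exact Finset.mem_univ i
    have := (Finset.mem_filter.mp this).2
    omega
  refine
    { toFun := fun b => ⟨fun i => ((b.1 i - 1 : ℕ) : ZMod (r + 1)), ?_⟩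
      invFun := fun a => ⟨fun i => (a.1 i).val + 1, ?_⟩
      left_inv := ?_
      right_inv := ?_ }
  · -- Good
    obtain ⟨b, hb1, hb2⟩ := b
    intro m hm
    have h := hb2 (m + 1) (by omega) (by omega)
    have : (Finset.univ.filter fun i => (((b i - 1 : ℕ) : ZMod (r + 1))).val ≤ m)
        = (Finset.univ.filter fun i => b i ≤ m + 1) := by
      apply Finset.filter_congr
      intro i _
      rw [ZMod.val_cast_of_lt (by have := hb1 i; omega)]
      have := hb1 i
      omega
    rw [this]
    exact h
  · -- IsParking
    obtain ⟨a, ha⟩ := a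
    constructor
    · intro i
      show 1 ≤ (a i).val + 1 ∧ (a i).val + 1 ≤ r
      exact ⟨by omega, goodBound a ha i⟩
    · intro k hk1 hkr
      have h := ha (k - 1) (by omega)
      have : (Finset.univ.filter fun i => (a i).val + 1 ≤ k)
          = (Finset.univ.filter fun i => (a i).val ≤ k - 1) := by
        apply Finset.filter_congr
        intro i _
        omega
      rw [this]
      omega
  · rintro ⟨b, hb1, hb2⟩
    apply Subtype.ext
    funext i
    show (((b i - 1 : ℕ) : ZMod (r + 1))).val + 1 = b i
    rw [ZMod.val_cast_of_lt (by have := hb1 i; omega)]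
    have := hb1 i
    omega
  · rintro ⟨a, ha⟩
    apply Subtype.ext
    funext i
    show (((a i).val + 1 - 1 : ℕ) : ZMod (r + 1)) = a i
    rw [show (a i).val + 1 - 1 = (a i).val by omega]
    exact ZMod.natCast_rightInverse _

/-- The number of parking functions of length `r` equals `(r+1)^{r−1}`. -/
theorem stmt10 (r : ℕ) :
    Nat.card {b : Fin r → ℕ // IsParking r b} = (r + 1) ^ (r - 1) := by
  have h1 := Nat.card_congr (parkEquiv r)
  have h2 := card_good r
  have h3 : (r + 1) * (r + 1) ^ (r - 1) = (r + 1) ^ r := by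
    cases r with
    | zero => simp
    | succ k => rw [← pow_succ']; norm_num
  rw [h1]
  have := h2.trans h3.symm
  exact Nat.eq_of_mul_eq_mul_left (by omega) this.symm |>.symm
end

section
/- The operators I_i (i = 1,…,n−1) on polynomials in y_1,…,y_n defined by (I_i g)(y_1,…,y_n) = ∫_0^{y_i − y_{i+1}} g(y_1,…,y_{i−1}, y_i − t, y_{i+1} + t, y_{i+2},…,y_n) dt satisfy (I_i)² = 0. -/
open MeasureTheory

/-- The integration operator `I_i` (with `j = i + 1`):
`(I_i g)(y) = ∫_0^{y_i − y_{i+1}} g(y_1,…,y_i − t, y_{i+1} + t,…,y_n) dt`. -/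
noncomputable def Iop {n : ℕ} (i j : Fin n) (f : (Fin n → ℝ) → ℝ) :
    (Fin n → ℝ) → ℝ :=
  fun y => ∫ t in (0 : ℝ)..(y i - y j),
    f (Function.update (Function.update y i (y i - t)) j (y j + t))

/-- The operators `I_i` satisfy `(I_i)² = 0` on polynomials. -/
theorem stmt14 (n : ℕ) (i j : Fin n) (hij : (j : ℕ) = (i : ℕ) + 1)
    (p : MvPolynomial (Fin n) ℝ) (y : Fin n → ℝ) :
    Iop i j (Iop i j (fun z => MvPolynomial.eval z p)) y = 0 := by
  have hne : i ≠ j := by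
    intro h; rw [h] at hij; omega
  set c := y i - y j with hc
  set h : ℝ → ℝ := fun u =>
    MvPolynomial.eval (Function.update (Function.update y i (y i - u)) j (y j + u)) p with hh
  have hcont : Continuous h := by
    apply (MvPolynomial.continuous_eval p).comp
    fun_prop
  have hint : ∀ a b : ℝ, IntervalIntegrable h volume a b :=
    fun a b => hcont.intervalIntegrable a b
  set H : ℝ → ℝ := fun x => ∫ u in (0:ℝ)..x, h u with hH
  have hHcont : Continuous H := intervalIntegral.continuous_primitive hint 0
  -- Step: rewrite the double integral
  have key : Iop i j (Iop i j (fun z => MvPolynomial.eval z p)) y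
      = ∫ s in (0:ℝ)..c, (H (c - s) - H s) := by
    unfold Iop
    refine intervalIntegral.integral_congr fun s _ => ?_
    have e1 : Function.update (Function.update y i (y i - s)) j (y j + s) i = y i - s := by
      simp [Function.update_apply, hne]
    have e2 : Function.update (Function.update y i (y i - s)) j (y j + s) j = y j + s := by
      simp
    rw [e1, e2]
    have e3 : ∀ t : ℝ,
        Function.update (Function.update
          (Function.update (Function.update y i (y i - s)) j (y j + s)) i (y i - s - t))
          j (y j + s + t)
        = Function.update (Function.update y i (y i - (s + t))) j (y j + (s + t)) := by
      intro t
      funext x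
      by_cases hx : x = j
      · subst hx; simp; ring
      · by_cases hx2 : x = i
        · simp [Function.update_apply, hx, hx2, hne]
          ring
        · simp [Function.update_apply, hx, hx2]
    have : (∫ t in (0:ℝ)..(y i - s - (y j + s)),
        MvPolynomial.eval (Function.update (Function.update
          (Function.update (Function.update y i (y i - s)) j (y j + s)) i (y i - s - t))
          j (y j + s + t)) p)
        = ∫ t in (0:ℝ)..(c - 2*s), h (t + s) := by
      have harg : y i - s - (y j + s) = c - 2*s := by rw [hc]; ring
      rw [harg]
      refine intervalIntegral.integral_congr fun t _ => ?_
      rw [e3, hh]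
      ring_nf
    rw [this, intervalIntegral.integral_comp_add_right h s]
    rw [zero_add]
    have : c - 2*s + s = c - s := by ring
    rw [this]
    rw [← intervalIntegral.integral_interval_sub_left (hint 0 (c - s)) (hint 0 s)]
  rw [key]
  have hsub : ∀ a b : ℝ, IntervalIntegrable (fun s => H (c - s)) volume a b := by
    intro a b
    exact ((hHcont.comp (by fun_prop)).intervalIntegrable a b)
  rw [intervalIntegral.integral_sub (hsub 0 c) (hHcont.intervalIntegrable 0 c)]
  rw [intervalIntegral.integral_comp_sub_left H c]
  simp
end

section
/- For r ≥ 1, the r-fold iterated integral D_r(y_1,…,y_{r+1}) = ∫_{y_{r+1}}^{y_r} dt_r ∫_{t_r}^{y_{r−1}} dt_{r−1} ⋯ ∫_{t_3}^{y_2} dt_2 ∫_{t_2}^{y_1} dt_1 satisfies D_r(y_1,…,y_{r+1}) = det(N), where N is the (r+1)×(r+1) matrix with N_{i,j} = y_i^{(i−j+1)} for i ≤ r, N_{r+1,j} = y_{r+1}^{(r+1−j)} for j ≤ r, and N_{r+1,r+1} = 1; here a^{(b)} = a^b/b! for b ≥ 0 and a^{(b)} = 0 for b < 0. -/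
open MeasureTheory

/-- The iterated integral
`D_r(y_1,…,y_{r+1}) = ∫_{y_{r+1}}^{y_r} dt_r ∫_{t_r}^{y_{r−1}} dt_{r−1} ⋯ ∫_{t_2}^{y_1} dt_1`,
defined recursively by `D_0 = 1` and
`D_{r+1}(y_1,…,y_{r+2}) = ∫_{y_{r+2}}^{y_{r+1}} D_r(y_1,…,y_r,t) dt`. -/
noncomputable def iterInt : (r : ℕ) → (Fin (r + 1) → ℝ) → ℝ
  | 0, _ => 1
  | r + 1, y =>
      ∫ t in (y (Fin.last (r + 1)))..(y ((Fin.last r).castSucc)),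
        iterInt r (Fin.snoc (fun i : Fin r => y i.castSucc.castSucc) t)

/-- Divided power `a^{(b)} = a^b/b!` for `b ≥ 0`, and `0` for `b < 0`. -/
noncomputable def dpow (a : ℝ) (b : ℤ) : ℝ :=
  if 0 ≤ b then a ^ b.toNat / (b.toNat).factorial else 0

namespace Stmt19Aux

/-- The determinant appearing in the statement. -/
noncomputable def Fdet (r : ℕ) (z : Fin (r + 1) → ℝ) : ℝ :=
  Matrix.det (Matrix.of fun i j : Fin (r + 1) =>
    if (i : ℕ) < r then dpow (z i) ((i : ℤ) - (j : ℤ) + 1)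
    else dpow (z i) ((r : ℤ) - (j : ℤ)))

lemma dpow_of_neg (a : ℝ) {b : ℤ} (hb : b < 0) : dpow a b = 0 := if_neg (not_le.2 hb)

lemma dpow_zero' (a : ℝ) : dpow a 0 = 1 := by simp [dpow]

lemma hasDerivAt_dpow (b : ℤ) (t : ℝ) :
    HasDerivAt (fun s => dpow s b) (dpow t (b - 1)) t := by
  rcases lt_trichotomy b 0 with h | h | h
  · have h1 : (fun s : ℝ => dpow s b) = fun _ => (0 : ℝ) := funext fun s => dpow_of_neg s h
    rw [h1, dpow_of_neg _ (by omega : b - 1 < 0)]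
    exact hasDerivAt_const t 0
  · subst h
    have h1 : (fun s : ℝ => dpow s 0) = fun _ => (1 : ℝ) := funext fun s => dpow_zero' s
    rw [h1, dpow_of_neg _ (by norm_num : (0 : ℤ) - 1 < 0)]
    exact hasDerivAt_const t 1
  · obtain ⟨n, rfl⟩ : ∃ n : ℕ, b = (n : ℤ) + 1 := ⟨(b - 1).toNat, by omega⟩
    have h1 : (fun s : ℝ => dpow s ((n : ℤ) + 1)) =
        fun s => s ^ (n + 1) / ((n + 1).factorial : ℝ) := by
      funext s
      simp only [dpow, if_pos (by omega : (0:ℤ) ≤ (n:ℤ)+1)]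
      norm_num
    rw [h1]
    have h2 : dpow t ((n : ℤ) + 1 - 1) = t ^ n / (n.factorial : ℝ) := by
      simp only [dpow, add_sub_cancel_right, if_pos (Int.ofNat_nonneg n)]
      norm_num
    rw [h2]
    have h3 := (hasDerivAt_pow (n + 1) t).div_const ((n + 1).factorial : ℝ)
    refine h3.congr_deriv ?_
    rw [Nat.factorial_succ]
    have hn : (n.factorial : ℝ) ≠ 0 := Nat.cast_ne_zero.2 n.factorial_ne_zero
    push_cast
    field_simp

lemma continuous_dpow (b : ℤ) : Continuous fun s : ℝ => dpow s b :=
  continuous_iff_continuousAt.2 fun t => (hasDerivAt_dpow b t).continuousAt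

lemma hasDerivAt_det_updateRow {n : ℕ} (A : Matrix (Fin n) (Fin n) ℝ) (i : Fin n)
    (v v' : ℝ → Fin n → ℝ) (t : ℝ) (hv : ∀ j, HasDerivAt (fun s => v s j) (v' t j) t) :
    HasDerivAt (fun s => (A.updateRow i (v s)).det) ((A.updateRow i (v' t)).det) t := by
  classical
  let L : (Fin n → ℝ) →ₗ[ℝ] ℝ :=
    (Matrix.detRowAlternating : (Fin n → ℝ) [⋀^Fin n]→ₗ[ℝ] ℝ).toMultilinearMap.toLinearMap A i
  have hL : ∀ w : Fin n → ℝ, (A.updateRow i w).det = L w := fun w => rfl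
  have hvv : HasDerivAt v (v' t) t := hasDerivAt_pi.2 hv
  have h := (LinearMap.toContinuousLinearMap L).hasFDerivAt (x := v t) |>.comp_hasDerivAt t hvv
  simpa only [Function.comp_def, hL, LinearMap.coe_toContinuousLinearMap'] using h

lemma snoc_lt {m : ℕ} (w : Fin m → ℝ) (t : ℝ) (k : Fin (m + 1)) (h : (k : ℕ) < m) :
    (Fin.snoc w t : Fin (m + 1) → ℝ) k = w ⟨(k : ℕ), h⟩ := by
  simp only [Fin.snoc, h, dite_true, Fin.castLT, cast_eq]

lemma snoc_eq {m : ℕ} (w : Fin m → ℝ) (t : ℝ) (k : Fin (m + 1)) (h : (k : ℕ) = m) :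
    (Fin.snoc w t : Fin (m + 1) → ℝ) k = t := by
  simp only [Fin.snoc, h, lt_irrefl, dite_false, cast_eq]

lemma continuous_Fdet_snoc (r : ℕ) (w : Fin r → ℝ) :
    Continuous fun t : ℝ => Fdet r (Fin.snoc w t) := by
  apply Continuous.matrix_det
  apply continuous_pi; intro i
  apply continuous_pi; intro j
  by_cases hi : (i : ℕ) < r
  · have h : ∀ t : ℝ, (Matrix.of fun i j : Fin (r + 1) =>
        if (i : ℕ) < r then dpow ((Fin.snoc w t : Fin (r + 1) → ℝ) i) ((i : ℤ) - (j : ℤ) + 1)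
        else dpow ((Fin.snoc w t : Fin (r + 1) → ℝ) i) ((r : ℤ) - (j : ℤ))) i j
        = dpow (w ⟨(i : ℕ), hi⟩) ((i : ℤ) - (j : ℤ) + 1) := fun t => by
      simp only [Matrix.of_apply, if_pos hi, snoc_lt w t i hi]
    simp only [h]; exact continuous_const
  · have hieq : (i : ℕ) = r := by omega
    have h : ∀ t : ℝ, (Matrix.of fun i j : Fin (r + 1) =>
        if (i : ℕ) < r then dpow ((Fin.snoc w t : Fin (r + 1) → ℝ) i) ((i : ℤ) - (j : ℤ) + 1)
        else dpow ((Fin.snoc w t : Fin (r + 1) → ℝ) i) ((r : ℤ) - (j : ℤ))) i j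
        = dpow t ((r : ℤ) - (j : ℤ)) := fun t => by
      simp only [Matrix.of_apply, if_neg hi, snoc_eq w t i hieq]
    simp only [h]; exact continuous_dpow _

lemma key (r : ℕ) (ys : Fin (r + 1) → ℝ) (t : ℝ) :
    HasDerivAt (fun s => Fdet (r + 1) (Fin.snoc ys s))
      (-(Fdet r (Fin.snoc (fun i : Fin r => ys i.castSucc) t))) t := by
  classical
  set A : Matrix (Fin (r + 2)) (Fin (r + 2)) ℝ :=
    Matrix.of (fun i j : Fin (r + 2) =>
      if (i : ℕ) < r + 1 then
        dpow ((Fin.snoc ys (0 : ℝ) : Fin (r + 2) → ℝ) i) ((i : ℤ) - (j : ℤ) + 1)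
      else 0) with hA
  set v : ℝ → Fin (r + 2) → ℝ := fun s j => dpow s (((r : ℤ) + 1) - (j : ℤ)) with hv
  set v' : ℝ → Fin (r + 2) → ℝ := fun s j => dpow s ((r : ℤ) - (j : ℤ)) with hv'
  have hM : ∀ s : ℝ, (Matrix.of fun i j : Fin (r + 2) =>
      if (i : ℕ) < r + 1 then
        dpow ((Fin.snoc ys s : Fin (r + 2) → ℝ) i) ((i : ℤ) - (j : ℤ) + 1)
      else dpow ((Fin.snoc ys s : Fin (r + 2) → ℝ) i) (((r + 1 : ℕ) : ℤ) - (j : ℤ)))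
      = A.updateRow (Fin.last (r + 1)) (v s) := by
    intro s
    ext i j
    by_cases hi : i = Fin.last (r + 1)
    · subst hi
      rw [Matrix.updateRow_self]
      simp only [Matrix.of_apply, Fin.val_last, lt_irrefl, if_neg (lt_irrefl (r + 1)),
        Fin.snoc_last, hv]
      rw [show ((r + 1 : ℕ) : ℤ) = (r : ℤ) + 1 from by push_cast; ring]
      simp
    · rw [Matrix.updateRow_ne hi]
      have hlt : (i : ℕ) < r + 1 := by
        have := Fin.val_lt_last hi
        omega
      simp only [Matrix.of_apply, if_pos hlt, hA, snoc_lt ys s i hlt, snoc_lt ys (0:ℝ) i hlt]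
  have hder : ∀ j : Fin (r + 2), HasDerivAt (fun s => v s j) (v' t j) t := by
    intro j
    have h := hasDerivAt_dpow (((r : ℤ) + 1) - (j : ℤ)) t
    have he : ((r : ℤ) + 1) - (j : ℤ) - 1 = (r : ℤ) - (j : ℤ) := by ring
    rw [he] at h
    exact h
  have hmain := hasDerivAt_det_updateRow A (Fin.last (r + 1)) v v' t hder
  have hfun : (fun s => (A.updateRow (Fin.last (r + 1)) (v s)).det)
      = fun s => Fdet (r + 1) (Fin.snoc ys s) := by
    funext s
    rw [Fdet, hM s]
  rw [hfun] at hmain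
  -- now compute the derivative determinant
  have hdet : (A.updateRow (Fin.last (r + 1)) (v' t)).det
      = -(Fdet r (Fin.snoc (fun i : Fin r => ys i.castSucc) t)) := by
    set B := A.updateRow (Fin.last (r + 1)) (v' t) with hB
    set w : Fin r → ℝ := fun i => ys i.castSucc with hw
    set i₀ : Fin (r + 2) := (Fin.last r).castSucc with hi₀
    have hi₀val : (i₀ : ℕ) = r := rfl
    rw [Matrix.det_succ_column B (Fin.last (r + 1))]
    rw [Finset.sum_eq_single i₀]
    · -- main term
      have hne : i₀ ≠ Fin.last (r + 1) := by
        intro h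
        have h2 := congrArg Fin.val h
        simp only [hi₀val, Fin.val_last] at h2
        omega
      have hBi₀ : B i₀ (Fin.last (r + 1)) = 1 := by
        rw [hB, Matrix.updateRow_ne hne]
        have hlt : (i₀ : ℕ) < r + 1 := by omega
        simp only [hA, Matrix.of_apply, if_pos hlt]
        have hexp : ((i₀ : ℕ) : ℤ) - (((Fin.last (r + 1)) : ℕ) : ℤ) + 1 = 0 := by
          simp only [hi₀val, Fin.val_last]
          push_cast
          ring
        rw [hexp, dpow_zero']
      have hminor : B.submatrix i₀.succAbove (Fin.last (r + 1)).succAbove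
          = Matrix.of (fun k l : Fin (r + 1) =>
            if (k : ℕ) < r then
              dpow ((Fin.snoc w t : Fin (r + 1) → ℝ) k) ((k : ℤ) - (l : ℤ) + 1)
            else dpow ((Fin.snoc w t : Fin (r + 1) → ℝ) k) ((r : ℤ) - (l : ℤ))) := by
        ext k l
        rw [Fin.succAbove_last]
        simp only [Matrix.submatrix_apply]
        by_cases hk : (k : ℕ) < r
        · have hsa : i₀.succAbove k = k.castSucc := by
            apply Fin.succAbove_of_castSucc_lt
            rw [Fin.lt_def]
            simpa [hi₀val] using hk
          have hne2 : (k.castSucc : Fin (r + 2)) ≠ Fin.last (r + 1) := by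
            intro h
            have h2 := congrArg Fin.val h
            simp only [Fin.coe_castSucc, Fin.val_last] at h2
            omega
          rw [hsa, hB, Matrix.updateRow_ne hne2]
          have hlt : ((k.castSucc : Fin (r + 2)) : ℕ) < r + 1 := by
            simp only [Fin.coe_castSucc]; omega
          simp only [hA, Matrix.of_apply, if_pos hlt]
          rw [if_pos hk]
          have harg : (Fin.snoc ys (0:ℝ) : Fin (r + 2) → ℝ) k.castSucc
              = (Fin.snoc w t : Fin (r + 1) → ℝ) k := by
            rw [snoc_lt ys (0:ℝ) k.castSucc hlt, snoc_lt w t k hk]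
            rfl
          rw [harg]
          simp only [Fin.coe_castSucc]
        · have hkeq : (k : ℕ) = r := by omega
          have hsa : i₀.succAbove k = Fin.last (r + 1) := by
            have hklast : k = Fin.last r := Fin.ext hkeq
            subst hklast
            rw [Fin.succAbove_of_le_castSucc _ _ (le_of_eq hi₀), Fin.succ_last]
          rw [hsa, hB, Matrix.updateRow_self]
          simp only [hv', Matrix.of_apply]
          rw [if_neg (by omega : ¬ (k : ℕ) < r), snoc_eq w t k hkeq]
          simp only [Fin.coe_castSucc]
      rw [hBi₀, hminor]
      have hsign : (-1 : ℝ) ^ ((i₀ : ℕ) + ((Fin.last (r + 1) : Fin (r + 2)) : ℕ)) = -1 := by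
        rw [hi₀val, Fin.val_last]
        rw [show r + (r + 1) = 2 * r + 1 by ring, pow_succ, pow_mul]
        norm_num
      rw [hsign, Fdet]
      ring
    · -- other rows contribute 0
      intro i _ hine
      have hcol : B i (Fin.last (r + 1)) = 0 := by
        by_cases hi : i = Fin.last (r + 1)
        · subst hi
          rw [hB, Matrix.updateRow_self]
          simp only [hv']
          rw [dpow_of_neg _ (by simp only [Fin.val_last]; push_cast; omega :
            ((r : ℤ) - (((Fin.last (r + 1) : Fin (r + 2)) : ℕ) : ℤ)) < 0)]
        · rw [hB, Matrix.updateRow_ne hi]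
          have hlt : (i : ℕ) < r + 1 := by
            have := Fin.val_lt_last hi; omega
          have hir : (i : ℕ) ≠ r := by
            intro h
            exact hine (Fin.ext (by simp only [hi₀val]; exact h))
          simp only [hA, Matrix.of_apply, if_pos hlt]
          rw [dpow_of_neg _ (by simp only [Fin.val_last]; push_cast; omega :
            (((i : ℕ) : ℤ) - (((Fin.last (r + 1) : Fin (r + 2)) : ℕ) : ℤ) + 1) < 0)]
      rw [hcol]
      ring
    · intro h
      exact absurd (Finset.mem_univ i₀) h
  rw [hdet] at hmain
  exact hmain

lemma mainAux : ∀ (r : ℕ) (y : Fin (r + 1) → ℝ), iterInt r y = Fdet r y := by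
  intro r
  induction r with
  | zero =>
    intro y
    show (1 : ℝ) = Fdet 0 y
    rw [Fdet, Matrix.det_fin_one]
    norm_num [Matrix.of_apply, dpow_zero']
  | succ r ih =>
    intro y
    set ys : Fin (r + 1) → ℝ := fun i => y i.castSucc with hys
    set w : Fin r → ℝ := fun i => y i.castSucc.castSucc with hw
    have hwys : w = fun i : Fin r => ys i.castSucc := rfl
    set a := y (Fin.last (r + 1)) with ha
    set b := y ((Fin.last r).castSucc) with hb
    set g : ℝ → ℝ := fun t => Fdet (r + 1) (Fin.snoc ys t) with hg
    set f : ℝ → ℝ := fun t => Fdet r (Fin.snoc w t) with hf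
    have hderiv : ∀ t : ℝ, HasDerivAt (fun s => -g s) (f t) t := by
      intro t
      have h := (key r ys t).neg
      rw [neg_neg, ← hwys] at h
      exact h
    have hint : IntervalIntegrable f volume a b :=
      (continuous_Fdet_snoc r w).intervalIntegrable a b
    have heq : ∫ t in a..b, f t = (-g b) - (-g a) :=
      intervalIntegral.integral_eq_sub_of_hasDerivAt (fun t _ => hderiv t) hint
    have hgb : g b = 0 := by
      show Fdet (r + 1) (Fin.snoc ys b) = 0
      rw [Fdet]
      apply Matrix.det_zero_of_row_eq
        (i := ((Fin.last r).castSucc : Fin (r + 2))) (j := Fin.last (r + 1))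
      · intro h
        have h2 := congrArg Fin.val h
        simp only [Fin.coe_castSucc, Fin.val_last] at h2
        omega
      · funext l
        have h1 : (((Fin.last r).castSucc : Fin (r + 2)) : ℕ) = r := rfl
        simp only [Matrix.of_apply, h1, Fin.val_last]
        rw [if_pos (by omega : r < r + 1), if_neg (by omega : ¬ r + 1 < r + 1)]
        rw [snoc_lt ys b _ (by rw [h1]; omega), Fin.snoc_last]
        have h2 : ys ⟨((((Fin.last r).castSucc : Fin (r + 2))) : ℕ), by rw [h1]; omega⟩ = b := by
          rw [hys, hb]
          congr 1
        rw [h2]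
        congr 1
        push_cast
        ring
    have hga : g a = Fdet (r + 1) y := by
      show Fdet (r + 1) (Fin.snoc ys a) = Fdet (r + 1) y
      congr 1
      funext i
      refine Fin.lastCases ?_ ?_ i
      · rw [Fin.snoc_last, ha]
      · intro k
        rw [Fin.snoc_castSucc, hys]
    have hii : iterInt (r + 1) y = ∫ t in a..b, f t := by
      rw [iterInt]
      congr 1
      funext t
      rw [ih]
    rw [hii, heq, hgb, hga]
    ring

end Stmt19Aux

/-- The iterated integral `D_r` equals the determinant of the
`(r+1)×(r+1)` matrix with rows `(y_i^{(i)}, y_i^{(i−1)}, …, y_i, 1, 0, …, 0)`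
for `i ≤ r` and last row `(y_{r+1}^{(r)}, …, y_{r+1}, 1)`. -/
theorem stmt19 (r : ℕ) (hr : 1 ≤ r) (y : Fin (r + 1) → ℝ) :
    iterInt r y =
      Matrix.det (Matrix.of fun i j : Fin (r + 1) =>
        if (i : ℕ) < r then dpow (y i) ((i : ℤ) - (j : ℤ) + 1)
        else dpow (y i) ((r : ℤ) - (j : ℤ))) := by
  exact Stmt19Aux.mainAux r y
end
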